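/- arXiv:1905.02028 — 10 statements merged into one kernel-verified Lean document; each statement's English description precedes it below -/
import Mathlib

section
/- Let Ω ⊂ ℝⁿ be a convex compact set with nonempty interior and M ≥ 0. Suppose u_k : Ω → ℝ is a sequence of convex functions with −M ≤ u_k ≤ 0 on Ω that converges pointwise on the interior of Ω to a convex function u : Ω → ℝ with −M ≤ u ≤ 0. Let f : ℝⁿ → ℝ be bounded and continuous. Then ∫_Ω f(∇u_k(x)) dx → ∫_Ω f(∇u(x)) dx as k → ∞, where ∇u_k and ∇u denote the gradients, which exist Lebesgue-almost everywhere on Ω since the functions are convex; in particular all the integrals are well defined and finite. -/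
/-!
Convex functions are locally Lipschitz on the interior of their domain, hence differentiable almost
everywhere there by Rademacher's theorem, and the frontier of a convex set is Lebesgue-null. So
almost every point `x` of `Ω` is an interior point at which all `u k` and `ulim` are differentiable.
At such a point the derivatives of the `u k` are subgradients, bounded by `2M/r` as soon as the
ball of radius `r` about `x` lies in `Ω`. Any cluster point `L` of them still satisfies
`L (y - x) ≤ ulim y - ulim x`, so `x` is a local minimum of `ulim - L`, which forces `L` to be the
derivative of `ulim` at `x`. Hence `f (∇ u k) → f (∇ ulim)` almost everywhere on `Ω`, and bounded
convergence on the finite-measure set `Ω` concludes.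
-/

open MeasureTheory Metric Set Filter
open scoped Topology

section Calculus

variable {E : Type*} [NormedAddCommGroup E] [NormedSpace ℝ E]

theorem ConvexOn.le_sub_of_hasFDerivAt {s : Set E} {g : E → ℝ} {g' : StrongDual ℝ E} {x y : E}
    (hg : ConvexOn ℝ s g) (hx : x ∈ s) (hy : y ∈ s) (h : HasFDerivAt g g' x) :
    g' (y - x) ≤ g y - g x := by
  have hline : ConvexOn ℝ (AffineMap.lineMap x y ⁻¹' s) (g ∘ AffineMap.lineMap x y) :=
    hg.comp_affineMap _
  have hderiv : HasDerivAt (g ∘ AffineMap.lineMap x y) (g' (y - x)) (0 : ℝ) := by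
    refine HasFDerivAt.comp_hasDerivAt (0 : ℝ) ?_ AffineMap.hasDerivAt_lineMap
    simpa using h
  simpa [slope_def_field] using
    hline.le_slope_of_hasDerivAt (by simpa using hx) (by simpa using hy) zero_lt_one hderiv

theorem ConvexOn.norm_le_of_hasFDerivAt {s : Set E} {g : E → ℝ} {g' : StrongDual ℝ E} {x : E}
    {r M : ℝ} (hg : ConvexOn ℝ s g) (hr : 0 < r) (hball : closedBall x r ⊆ s)
    (hbd : ∀ y ∈ s, |g y| ≤ M) (h : HasFDerivAt g g' x) : ‖g'‖ ≤ 2 * M / r := by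
  have hmem : ∀ v ∈ closedBall (0 : E) r, x + v ∈ s := fun v hv =>
    hball (by simpa [dist_eq_norm] using hv)
  have hx : x ∈ s := hball (mem_closedBall_self hr.le)
  have hle : ∀ v ∈ closedBall (0 : E) r, g' v ≤ 2 * M := fun v hv => by
    have hsub := hg.le_sub_of_hasFDerivAt hx (hmem v hv) h
    rw [add_sub_cancel_left] at hsub
    linarith [(abs_le.1 (hbd _ (hmem v hv))).2, (abs_le.1 (hbd x hx)).1]
  refine g'.opNorm_bound_of_ball_bound hr _ fun v hv => abs_le.2 ⟨?_, hle v hv⟩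
  linarith [hle (-v) (by simpa using hv), map_neg g' v]

theorem HasFDerivAt.eq_of_eventually_le_sub {g : E → ℝ} {g' L : StrongDual ℝ E} {x : E}
    (h : HasFDerivAt g g' x) (hL : ∀ᶠ y in 𝓝 x, L (y - x) ≤ g y - g x) : L = g' := by
  have hmin : IsLocalMin (fun y => g y - L (y - x)) x :=
    hL.mono fun y hy => by simp only [sub_self, map_zero, sub_zero]; linarith
  have hderiv : HasFDerivAt (fun y => g y - L (y - x)) (g' - L) x :=
    h.sub (L.hasFDerivAt.comp x ((hasFDerivAt_id x).sub_const x))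
  exact (sub_eq_zero.1 (hmin.hasFDerivAt_eq_zero hderiv)).symm

theorem tendsto_fderiv_of_convexOn [FiniteDimensional ℝ E] {U : Set E} {g : ℕ → E → ℝ}
    {g₀ : E → ℝ} {M : ℝ} {x : E} (hU : IsOpen U) (hg : ∀ k, ConvexOn ℝ U (g k))
    (hbd : ∀ k, ∀ y ∈ U, |g k y| ≤ M) (hlim : ∀ y ∈ U, Tendsto (fun k => g k y) atTop (𝓝 (g₀ y)))
    (hx : x ∈ U) (hgx : ∀ k, DifferentiableAt ℝ (g k) x) (hg₀x : DifferentiableAt ℝ g₀ x) :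
    Tendsto (fun k => fderiv ℝ (g k) x) atTop (𝓝 (fderiv ℝ g₀ x)) := by
  obtain ⟨r, hr, hball⟩ := nhds_basis_closedBall.mem_iff.1 (hU.mem_nhds hx)
  have hbounded : ∀ k, fderiv ℝ (g k) x ∈ closedBall 0 (2 * M / r) := fun k =>
    mem_closedBall_zero_iff.2 ((hg k).norm_le_of_hasFDerivAt hr hball (hbd k) (hgx k).hasFDerivAt)
  refine (isCompact_closedBall _ _).tendsto_nhds_of_unique_mapClusterPt (.of_forall hbounded)
    fun L _ hL => hg₀x.hasFDerivAt.eq_of_eventually_le_sub ?_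
  obtain ⟨ψ, hψ, hLψ⟩ := hL.tendsto_subseq
  filter_upwards [hU.mem_nhds hx] with y hy
  exact le_of_tendsto_of_tendsto' (((continuous_eval_const (y - x)).tendsto L).comp hLψ)
    (((hlim y hy).sub (hlim x hx)).comp hψ.tendsto_atTop)
    fun k => (hg (ψ k)).le_sub_of_hasFDerivAt hx hy (hgx _).hasFDerivAt

end Calculus

section Measure

variable {E : Type*} [NormedAddCommGroup E] [NormedSpace ℝ E] [FiniteDimensional ℝ E]
  [MeasurableSpace E] [BorelSpace E] {μ : Measure E} [μ.IsAddHaarMeasure]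

theorem LocallyLipschitzOn.ae_differentiableAt_of_mem {F : Type*} [NormedAddCommGroup F]
    [NormedSpace ℝ F] [FiniteDimensional ℝ F] {U : Set E} {f : E → F} (hU : IsOpen U)
    (hf : LocallyLipschitzOn U f) : ∀ᵐ x ∂μ, x ∈ U → DifferentiableAt ℝ f x := by
  set B := {x | ¬(x ∈ U → DifferentiableAt ℝ f x)}
  refine ae_iff.2 (measure_null_of_locally_null B fun x hx => ?_)
  have hxU : x ∈ U := (Classical.not_imp.1 hx).1
  obtain ⟨K, t, ht, hlip⟩ := hf hxU
  rw [hU.nhdsWithin_eq hxU] at ht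
  refine ⟨B ∩ interior t, inter_mem_nhdsWithin B (interior_mem_nhds.2 ht), ?_⟩
  refine measure_mono_null ?_
    (ae_iff.1 ((hlip.mono interior_subset).ae_differentiableWithinAt_of_mem (μ := μ)))
  rintro y ⟨hyB, hyt⟩ hdiff
  exact hyB fun _ => (hdiff hyt).differentiableAt (isOpen_interior.mem_nhds hyt)

theorem ConvexOn.ae_differentiableAt_of_mem_interior {s : Set E} {f : E → ℝ}
    (hf : ConvexOn ℝ s f) : ∀ᵐ x ∂μ, x ∈ interior s → DifferentiableAt ℝ f x :=
  hf.locallyLipschitzOn_interior.ae_differentiableAt_of_mem isOpen_interior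

theorem Convex.ae_restrict_mem_interior {s : Set E} (hs : Convex ℝ s) :
    ∀ᵐ x ∂μ.restrict s, x ∈ interior s := by
  change μ.restrict s (interior s)ᶜ = 0
  rw [Measure.restrict_apply isOpen_interior.measurableSet.compl]
  refine measure_mono_null (fun x hx => ?_) (hs.addHaar_frontier μ)
  exact show x ∈ closure s \ interior s from ⟨subset_closure hx.2, hx.1⟩

end Measure

theorem measurable_gradient {E : Type*} [NormedAddCommGroup E] [InnerProductSpace ℝ E]
    [CompleteSpace E] [MeasurableSpace E] [BorelSpace E] (g : E → ℝ) :
    Measurable (gradient g) :=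
  (InnerProductSpace.toDual ℝ E).symm.continuous.measurable.comp (measurable_fderiv ℝ g)

theorem newton_gradient_integral_convergence_general
    (n : ℕ) (Ω : Set (EuclideanSpace ℝ (Fin n)))
    (hΩconv : Convex ℝ Ω) (hΩcomp : IsCompact Ω)
    (M : ℝ)
    (u : ℕ → EuclideanSpace ℝ (Fin n) → ℝ) (ulim : EuclideanSpace ℝ (Fin n) → ℝ)
    (huconv : ∀ k, ConvexOn ℝ Ω (u k))
    (hubd : ∀ k, ∀ x ∈ Ω, -M ≤ u k x ∧ u k x ≤ 0)
    (hlimconv : ConvexOn ℝ Ω ulim)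
    (hptwise : ∀ x ∈ interior Ω,
      Filter.Tendsto (fun k => u k x) Filter.atTop (nhds (ulim x)))
    (f : EuclideanSpace ℝ (Fin n) → ℝ) (hf : Continuous f)
    (hfbdd : ∃ C, ∀ p, |f p| ≤ C) :
    (∀ k, MeasureTheory.IntegrableOn (fun x => f (gradient (u k) x)) Ω) ∧
    MeasureTheory.IntegrableOn (fun x => f (gradient ulim x)) Ω ∧
    Filter.Tendsto (fun k => ∫ x in Ω, f (gradient (u k) x)) Filter.atTop
      (nhds (∫ x in Ω, f (gradient ulim x))) := by
  obtain ⟨C, hC⟩ := hfbdd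
  have : IsFiniteMeasure (volume.restrict Ω) := isFiniteMeasure_restrict.2 hΩcomp.measure_lt_top.ne
  have hmeas (g : EuclideanSpace ℝ (Fin n) → ℝ) :
      AEStronglyMeasurable (fun x => f (gradient g x)) (volume.restrict Ω) :=
    (hf.measurable.comp (measurable_gradient g)).aestronglyMeasurable
  have hbound (g : EuclideanSpace ℝ (Fin n) → ℝ) :
      ∀ᵐ x ∂volume.restrict Ω, ‖f (gradient g x)‖ ≤ C :=
    .of_forall fun x => hC _
  have hu_abs : ∀ k, ∀ x ∈ interior Ω, |u k x| ≤ M := fun k x hx => by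
    obtain ⟨hlow, hup⟩ := hubd k x (interior_subset hx)
    exact abs_le.2 ⟨hlow, by linarith⟩
  refine ⟨fun k => Integrable.of_bound (hmeas _) C (hbound _),
    Integrable.of_bound (hmeas _) C (hbound _),
    tendsto_integral_filter_of_norm_le_const (.of_forall fun k => hmeas _)
      ⟨C, .of_forall fun k => hbound _⟩ ?_⟩
  filter_upwards [hΩconv.ae_restrict_mem_interior,
    ae_restrict_of_ae (ae_all_iff.2 fun k => (huconv k).ae_differentiableAt_of_mem_interior),
    ae_restrict_of_ae hlimconv.ae_differentiableAt_of_mem_interior] with x hx hdu hdlim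
  have hgrad := tendsto_fderiv_of_convexOn isOpen_interior
    (fun k => (huconv k).subset interior_subset hΩconv.interior) hu_abs hptwise hx
    (fun k => hdu k hx) (hdlim hx)
  -- `gradient g x` is by definition `(toDual ℝ _).symm (fderiv ℝ g x)`
  exact (hf.tendsto _).comp (((InnerProductSpace.toDual ℝ _).symm.continuous.tendsto _).comp hgrad)

/-- If convex functions `u_k` on a convex body `Ω ⊂ ℝⁿ`, uniformly bounded
between `−M` and `0`, converge pointwise on the interior of `Ω` to a convex function `u`
(also bounded between `−M` and `0`), and `f` is bounded and continuous, then
`∫_Ω f(∇u_k) → ∫_Ω f(∇u)`, all integrals being well defined and finite. -/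
theorem newton_gradient_integral_convergence
    (n : ℕ) (hn : 1 ≤ n) (Ω : Set (EuclideanSpace ℝ (Fin n)))
    (hΩconv : Convex ℝ Ω) (hΩcomp : IsCompact Ω) (hΩint : (interior Ω).Nonempty)
    (M : ℝ) (hM : 0 ≤ M)
    (u : ℕ → EuclideanSpace ℝ (Fin n) → ℝ) (ulim : EuclideanSpace ℝ (Fin n) → ℝ)
    (huconv : ∀ k, ConvexOn ℝ Ω (u k))
    (hubd : ∀ k, ∀ x ∈ Ω, -M ≤ u k x ∧ u k x ≤ 0)
    (hlimconv : ConvexOn ℝ Ω ulim)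
    (hlimbd : ∀ x ∈ Ω, -M ≤ ulim x ∧ ulim x ≤ 0)
    (hptwise : ∀ x ∈ interior Ω,
      Filter.Tendsto (fun k => u k x) Filter.atTop (nhds (ulim x)))
    (f : EuclideanSpace ℝ (Fin n) → ℝ) (hf : Continuous f)
    (hfbdd : ∃ C, ∀ p, |f p| ≤ C) :
    (∀ k, MeasureTheory.IntegrableOn (fun x => f (gradient (u k) x)) Ω) ∧
    MeasureTheory.IntegrableOn (fun x => f (gradient ulim x)) Ω ∧
    Filter.Tendsto (fun k => ∫ x in Ω, f (gradient (u k) x)) Filter.atTop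
      (nhds (∫ x in Ω, f (gradient ulim x))) :=
  newton_gradient_integral_convergence_general n Ω hΩconv hΩcomp M u ulim huconv hubd hlimconv
    hptwise f hf hfbdd
end

section
/- Let U ⊂ ℝ² be a convex set with nonempty interior, t₀ < t₁, s₀ < s₁ real numbers, x₀, x₁ ∈ ℝ, and f ∈ C²(ℝ³, ℝ). Consider the problem of minimizing I(x) = ∫_{t₀}^{t₁} f(t, x(t), ẋ(t)) dt over convex functions x : [t₀, t₁] → ℝ with (t, x(t)) ∈ U for all t, x(t₀) = x₀, x(t₁) = x₁, right derivative ẋ(t₀+0) ≥ s₀ and left derivative ẋ(t₁−0) ≤ s₁. Suppose x̂ is an optimal solution of this problem, (t, x̂(t)) lies in the interior of U for all t ∈ (t₀, t₁), and the strong Legendre condition f_{ẋẋ}(t, x, ẋ) > 0 holds at every point of the graph Γ = {(t, x, ẋ) : t ∈ [t₀, t₁], x = x̂(t), ẋ ∈ ∂x̂(t)} ⊂ ℝ³, where ∂x̂(t) is the subdifferential of x̂ at t. Then x̂ ∈ C¹[t₀, t₁]. -/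
/-!
If `x̂` had a corner at `τ`, i.e. left derivative `p` < right derivative `q`, replace it on
`[τ - ε, τ + ε]` by `max x̂ ℓ`, where `ℓ` is the chord over that interval; this is again admissible
because `x̂` is convex and `U` is convex. Near `τ` the integrand along `x̂` is close to `F p` on the
left and to `F q` on the right, where `F w = f (τ, x̂ τ, w)`, while along the chord it is close to
`F ((p + q) / 2)`. The Legendre condition makes `F` strictly convex on `[p, q] = ∂x̂(τ)`, so for
small `ε` the corner cut lowers `I` by about `ε (F p + F q - 2 F ((p + q) / 2)) > 0`, contradicting
optimality. Hence `x̂` is differentiable on `[t₀, t₁]`, and the derivative of a differentiable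
convex function is continuous: the subgradients at `s` tend to `x̂'(t)` as `s → t` from either side.
-/

open Set Filter Topology MeasureTheory

def HasSubgradientWithinAt (g : ℝ → ℝ) (v : ℝ) (S : Set ℝ) (t : ℝ) : Prop :=
  ∀ s ∈ S, g t + v * (s - t) ≤ g s

variable {g : ℝ → ℝ} {S : Set ℝ} {s t v g' : ℝ}

namespace HasSubgradientWithinAt

lemma slope_le (h : HasSubgradientWithinAt g v S t) (hs : s ∈ S) (hst : s < t) :
    slope g s t ≤ v := by
  have := h s hs
  rw [slope_def_field, div_le_iff₀ (sub_pos.2 hst)]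
  linarith

lemma le_slope (h : HasSubgradientWithinAt g v S t) (hs : s ∈ S) (hts : t < s) :
    v ≤ slope g t s := by
  have := h s hs
  rw [slope_def_field, le_div_iff₀ (sub_pos.2 hts)]
  linarith

end HasSubgradientWithinAt

lemma hasSubgradientWithinAt_of_slope_le_of_le_slope
    (hl : ∀ s ∈ S, s < t → slope g s t ≤ v) (hr : ∀ s ∈ S, t < s → v ≤ slope g t s) :
    HasSubgradientWithinAt g v S t := by
  intro s hs
  rcases lt_trichotomy s t with hst | rfl | hts
  · have := hl s hs hst
    rw [slope_def_field, div_le_iff₀ (sub_pos.2 hst)] at this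
    linarith
  · simp
  · have := hr s hs hts
    rw [slope_def_field, le_div_iff₀ (sub_pos.2 hts)] at this
    linarith

lemma HasDerivWithinAt.tendsto_subgradient_nhdsGT (hd : HasDerivWithinAt g g' (S ∩ Ioi t) t)
    (ht : t ∈ S) {v : ℝ → ℝ} (hv : ∀ᶠ s in 𝓝[S ∩ Ioi t] t, HasSubgradientWithinAt g (v s) S s) :
    Tendsto v (𝓝[S ∩ Ioi t] t) (𝓝 g') := by
  have hslope : Tendsto (slope g t) (𝓝[S ∩ Ioi t] t) (𝓝 g') := by
    simpa using hasDerivWithinAt_iff_tendsto_slope.1 hd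
  rcases (𝓝[S ∩ Ioi t] t).eq_or_neBot with hbot | _
  · rw [hbot]; exact tendsto_bot
  refine tendsto_order.2 ⟨fun m hm => ?_, fun m hm => ?_⟩
  · filter_upwards [hslope.eventually (lt_mem_nhds hm), hv, self_mem_nhdsWithin]
      with s hs hvs hsS
    exact hs.trans_le (hvs.slope_le ht hsS.2)
  · obtain ⟨m', hm', hm'm⟩ := exists_between hm
    obtain ⟨u, hu, huS⟩ :=
      ((hslope.eventually (gt_mem_nhds hm')).and self_mem_nhdsWithin).exists
    have hcont : Tendsto (fun s => slope g s u) (𝓝[S ∩ Ioi t] t) (𝓝 (slope g t u)) := by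
      simp only [slope_def_field]
      exact (continuousWithinAt_const.sub hd.continuousWithinAt).div
        (continuousWithinAt_const.sub continuousWithinAt_id) (sub_ne_zero.2 huS.2.ne')
    filter_upwards [hcont.eventually (gt_mem_nhds (hu.trans hm'm)), hv,
      nhdsWithin_le_nhds (Iio_mem_nhds huS.2)] with s hs hvs hsu
    exact (hvs.le_slope huS.1 hsu).trans_lt hs

lemma HasDerivWithinAt.tendsto_subgradient_nhdsLT (hd : HasDerivWithinAt g g' (S ∩ Iio t) t)
    (ht : t ∈ S) {v : ℝ → ℝ} (hv : ∀ᶠ s in 𝓝[S ∩ Iio t] t, HasSubgradientWithinAt g (v s) S s) :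
    Tendsto v (𝓝[S ∩ Iio t] t) (𝓝 g') := by
  have hslope : Tendsto (slope g t) (𝓝[S ∩ Iio t] t) (𝓝 g') := by
    simpa using hasDerivWithinAt_iff_tendsto_slope.1 hd
  rcases (𝓝[S ∩ Iio t] t).eq_or_neBot with hbot | _
  · rw [hbot]; exact tendsto_bot
  refine tendsto_order.2 ⟨fun m hm => ?_, fun m hm => ?_⟩
  · obtain ⟨m', hmm', hm'⟩ := exists_between hm
    obtain ⟨u, hu, huS⟩ :=
      ((hslope.eventually (lt_mem_nhds hm')).and self_mem_nhdsWithin).exists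
    have hcont : Tendsto (fun s => slope g u s) (𝓝[S ∩ Iio t] t) (𝓝 (slope g u t)) := by
      simp only [slope_def_field]
      exact (hd.continuousWithinAt.sub continuousWithinAt_const).div
        (continuousWithinAt_id.sub continuousWithinAt_const) (sub_ne_zero.2 huS.2.ne')
    rw [slope_comm] at hu
    filter_upwards [hcont.eventually (lt_mem_nhds (hmm'.trans hu)), hv,
      nhdsWithin_le_nhds (Ioi_mem_nhds huS.2)] with s hs hvs hus
    exact hs.trans_le (hvs.slope_le huS.1 hus)
  · filter_upwards [hslope.eventually (gt_mem_nhds hm), hv, self_mem_nhdsWithin]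
      with s hs hvs hsS
    rw [slope_comm] at hs
    exact (hvs.le_slope ht hsS.2).trans_lt hs

namespace ConvexOn

lemma hasSubgradientWithinAt_of_mem_Icc (hg : ConvexOn ℝ S g) (ht : t ∈ interior S)
    (hv : v ∈ Icc (derivWithin g (Iio t) t) (derivWithin g (Ioi t) t)) :
    HasSubgradientWithinAt g v S t :=
  hasSubgradientWithinAt_of_slope_le_of_le_slope
    (fun _ hs hst => (hg.slope_le_leftDeriv_of_mem_interior hs ht hst).trans hv.1)
    (fun _ hs hts => hv.2.trans (hg.rightDeriv_le_slope_of_mem_interior ht hs hts))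

lemma hasSubgradientWithinAt_rightDeriv (hg : ConvexOn ℝ S g) (ht : t ∈ interior S) :
    HasSubgradientWithinAt g (derivWithin g (Ioi t) t) S t :=
  hg.hasSubgradientWithinAt_of_mem_Icc ht ⟨hg.leftDeriv_le_rightDeriv_of_mem_interior ht, le_rfl⟩

lemma hasSubgradientWithinAt_of_hasDerivWithinAt (hg : ConvexOn ℝ S g) (ht : t ∈ S)
    (hd : HasDerivWithinAt g g' S t) : HasSubgradientWithinAt g g' S t :=
  hasSubgradientWithinAt_of_slope_le_of_le_slope
    (fun _ hs hst => hg.slope_le_of_hasDerivWithinAt hs ht hst hd)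
    (fun _ hs hts => hg.le_slope_of_hasDerivWithinAt ht hs hts hd)

lemma tendsto_rightDeriv_nhdsLT (hg : ConvexOn ℝ S g) (ht : t ∈ interior S) :
    Tendsto (fun s => derivWithin g (Ioi s) s) (𝓝[<] t) (𝓝 (derivWithin g (Iio t) t)) := by
  rw [← nhdsWithin_inter_of_mem (mem_nhdsWithin_of_mem_nhds (mem_interior_iff_mem_nhds.1 ht))]
  refine ((hg.hasDerivWithinAt_leftDeriv_of_mem_interior ht).mono inter_subset_right)
    |>.tendsto_subgradient_nhdsLT (interior_subset ht) ?_
  filter_upwards [nhdsWithin_le_nhds (isOpen_interior.mem_nhds ht)] with s hs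
  exact hg.hasSubgradientWithinAt_rightDeriv hs

lemma tendsto_rightDeriv_nhdsGT (hg : ConvexOn ℝ S g) (ht : t ∈ interior S) :
    Tendsto (fun s => derivWithin g (Ioi s) s) (𝓝[>] t) (𝓝 (derivWithin g (Ioi t) t)) := by
  rw [← nhdsWithin_inter_of_mem (mem_nhdsWithin_of_mem_nhds (mem_interior_iff_mem_nhds.1 ht))]
  refine ((hg.hasDerivWithinAt_rightDeriv_of_mem_interior ht).mono inter_subset_right)
    |>.tendsto_subgradient_nhdsGT (interior_subset ht) ?_
  filter_upwards [nhdsWithin_le_nhds (isOpen_interior.mem_nhds ht)] with s hs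
  exact hg.hasSubgradientWithinAt_rightDeriv hs

lemma continuousOn_derivWithin (hg : ConvexOn ℝ S g) (hd : DifferentiableOn ℝ g S) :
    ContinuousOn (derivWithin g S) S := by
  intro t ht
  have hsub : ∀ s ∈ S, HasSubgradientWithinAt g (derivWithin g S s) S s := fun s hs =>
    hg.hasSubgradientWithinAt_of_hasDerivWithinAt hs (hd s hs).hasDerivWithinAt
  have hl := ((hd t ht).hasDerivWithinAt.mono inter_subset_left).tendsto_subgradient_nhdsLT ht
    (eventually_nhdsWithin_of_forall fun s hs => hsub s hs.1)
  have hr := ((hd t ht).hasDerivWithinAt.mono inter_subset_left).tendsto_subgradient_nhdsGT ht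
    (eventually_nhdsWithin_of_forall fun s hs => hsub s hs.1)
  have hS : S \ {t} = S ∩ Iio t ∪ S ∩ Ioi t := by
    ext s; simp [← and_or_left, lt_or_lt_iff_ne]
  rw [← continuousWithinAt_sdiff_self, hS]
  exact ContinuousWithinAt.union hl hr

lemma contDiffOn_one_of_differentiableOn (hg : ConvexOn ℝ S g) (hS : UniqueDiffOn ℝ S)
    (hd : DifferentiableOn ℝ g S) : ContDiffOn ℝ 1 g S :=
  (contDiffOn_one_iff_derivWithin hS).2 ⟨hd, hg.continuousOn_derivWithin hd⟩

lemma hasDerivAt_of_leftDeriv_eq_rightDeriv (hg : ConvexOn ℝ S g) (ht : t ∈ interior S)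
    (h : derivWithin g (Iio t) t = derivWithin g (Ioi t) t) :
    HasDerivAt g (derivWithin g (Ioi t) t) t := by
  have hl := hg.hasDerivWithinAt_leftDeriv_of_mem_interior ht
  rw [h] at hl
  have := hl.union (hg.hasDerivWithinAt_rightDeriv_of_mem_interior ht)
  rwa [Iio_union_Ioi, compl_eq_univ_sdiff, hasDerivWithinAt_sdiff_singleton,
    hasDerivWithinAt_univ] at this

lemma differentiableOn_Icc_of_leftDeriv_eq_rightDeriv {a b : ℝ} (hg : ConvexOn ℝ (Icc a b) g)
    (ha : DifferentiableWithinAt ℝ g (Icc a b) a) (hb : DifferentiableWithinAt ℝ g (Icc a b) b)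
    (h : ∀ t ∈ Ioo a b, derivWithin g (Iio t) t = derivWithin g (Ioi t) t) :
    DifferentiableOn ℝ g (Icc a b) := by
  intro t ht
  rcases ht.1.eq_or_lt with rfl | hat
  · exact ha
  rcases ht.2.eq_or_lt with rfl | htb
  · exact hb
  have ht' : t ∈ interior (Icc a b) := by rw [interior_Icc]; exact ⟨hat, htb⟩
  exact (hg.hasDerivAt_of_leftDeriv_eq_rightDeriv ht' (h t ⟨hat, htb⟩)).differentiableAt
    |>.differentiableWithinAt

lemma countable_not_differentiableAt (hg : ConvexOn ℝ S g) :
    {t ∈ interior S | ¬DifferentiableAt ℝ g t}.Countable := by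
  -- the right derivative is monotone, so continuous off a countable set, and at a point of
  -- continuity its left limit, the left derivative, equals it
  refine hg.monotoneOn_rightDeriv.countable_not_continuousWithinAt.mono ?_
  rintro t ⟨ht, hnd⟩
  refine ⟨ht, fun hc => hnd ?_⟩
  have hc' := hc.continuousAt (isOpen_interior.mem_nhds ht)
  exact (hg.hasDerivAt_of_leftDeriv_eq_rightDeriv ht (tendsto_nhds_unique
    (hg.tendsto_rightDeriv_nhdsLT ht) (hc'.tendsto.mono_left nhdsWithin_le_nhds))).differentiableAt

lemma ae_derivWithin_eq_rightDeriv (hg : ConvexOn ℝ S g) :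
    ∀ᵐ t, t ∈ interior S → derivWithin g S t = derivWithin g (Ioi t) t := by
  filter_upwards [hg.countable_not_differentiableAt.ae_notMem volume] with t hnd ht
  have hdiff : DifferentiableAt ℝ g t := by_contra fun h => hnd ⟨ht, h⟩
  rw [derivWithin_of_mem_nhds (mem_interior_iff_mem_nhds.1 ht),
    hdiff.derivWithin (uniqueDiffWithinAt_Ioi t)]

lemma integrableOn_comp_derivWithin {a b d₀ d₁ : ℝ} (hg : ConvexOn ℝ (Icc a b) g) (hab : a < b)
    (h₀ : HasDerivWithinAt g d₀ (Icc a b) a) (h₁ : HasDerivWithinAt g d₁ (Icc a b) b)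
    {F : ℝ × ℝ × ℝ → ℝ} (hF : Continuous F) :
    IntegrableOn (fun t => F (t, g t, derivWithin g (Icc a b) t)) (Icc a b) := by
  have hgc : ContinuousOn g (Icc a b) := hg.continuousOn_Icc hab
    (h₀.continuousWithinAt.mono_of_mem_nhdsWithin (Icc_mem_nhdsGE hab))
    (h₁.continuousWithinAt.mono_of_mem_nhdsWithin (Icc_mem_nhdsLE hab))
  have hae : ∀ᵐ t ∂volume.restrict (Icc a b), derivWithin g (Icc a b) t =
      derivWithin g (Ioi t) t ∧ derivWithin g (Ioi t) t ∈ Icc d₀ d₁ := by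
    rw [ae_restrict_iff' measurableSet_Icc]
    filter_upwards [hg.ae_derivWithin_eq_rightDeriv, Measure.ae_ne volume a,
      Measure.ae_ne volume b] with t hd hta htb ht
    have hti : t ∈ interior (Icc a b) := by
      rw [interior_Icc]; exact ⟨ht.1.lt_of_ne' hta, ht.2.lt_of_ne htb⟩
    have hsub := hg.hasSubgradientWithinAt_rightDeriv hti
    rw [interior_Icc] at hti
    exact ⟨hd (by rwa [interior_Icc]),
      (hg.le_slope_of_hasDerivWithinAt (left_mem_Icc.2 hab.le) ht hti.1 h₀).trans
        (hsub.slope_le (left_mem_Icc.2 hab.le) hti.1),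
      (hsub.le_slope (right_mem_Icc.2 hab.le) hti.2).trans
        (hg.slope_le_of_hasDerivWithinAt ht (right_mem_Icc.2 hab.le) hti.2 h₁)⟩
  obtain ⟨C, hC⟩ := (isCompact_Icc.prod ((isCompact_Icc.image_of_continuousOn hgc).prod
    isCompact_Icc)).exists_bound_of_continuousOn hF.continuousOn
  have hmeas : AEStronglyMeasurable (fun t => F (t, g t, derivWithin g (Ioi t) t))
      (volume.restrict (Icc a b)) :=
    (hF.measurable.comp_aemeasurable (aemeasurable_id.prodMk ((hgc.aemeasurable
      measurableSet_Icc).prodMk (measurable_derivWithin_Ioi g).aemeasurable))).aestronglyMeasurable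
  refine Integrable.of_bound (hmeas.congr ?_) C ?_
  · filter_upwards [hae] with t ht using by rw [ht.1]
  · filter_upwards [hae, ae_restrict_mem measurableSet_Icc] with t ht htI
    rw [ht.1]
    exact hC _ ⟨htI, mem_image_of_mem g htI, ht.2⟩

end ConvexOn

noncomputable def chord (g : ℝ → ℝ) (c d t : ℝ) : ℝ := g c + slope g c d * (t - c)

variable {c d : ℝ}

lemma hasDerivAt_chord : HasDerivAt (chord g c d) (slope g c d) t := by
  have := ((hasDerivAt_id t).sub_const c).const_mul (slope g c d) |>.const_add (g c)
  rwa [mul_one] at this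

lemma convexOn_chord (hS : Convex ℝ S) : ConvexOn ℝ S (chord g c d) :=
  ⟨hS, fun x _ y _ p q _ _ hpq => le_of_eq <| by
    simp only [chord, smul_eq_mul]; linear_combination (slope g c d * c - g c) * hpq⟩

lemma chord_eq_add_smul_sub : chord g c d t = g c + (t - c) / (d - c) * (g d - g c) := by
  rw [chord, slope_def_field]; field_simp

lemma chord_mem_uIcc (hcd : c < d) (ht : t ∈ Icc c d) : chord g c d t ∈ uIcc (g c) (g d) := by
  rw [chord_eq_add_smul_sub]
  exact (convex_uIcc _ _).add_smul_sub_mem left_mem_uIcc right_mem_uIcc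
    ⟨div_nonneg (sub_nonneg.2 ht.1) (sub_pos.2 hcd).le,
      (div_le_one (sub_pos.2 hcd)).2 (by linarith [ht.2])⟩

lemma Convex.prodMk_chord_mem {U : Set (ℝ × ℝ)} (hU : Convex ℝ U) (hc : (c, g c) ∈ U)
    (hd : (d, g d) ∈ U) (hcd : c < d) (ht : t ∈ Icc c d) : (t, chord g c d t) ∈ U := by
  convert hU.add_smul_sub_mem hc hd (t := (t - c) / (d - c))
    ⟨div_nonneg (sub_nonneg.2 ht.1) (sub_pos.2 hcd).le,
      (div_le_one (sub_pos.2 hcd)).2 (by linarith [ht.2])⟩ using 1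
  rw [chord_eq_add_smul_sub]
  ext
  · simp only [Prod.fst_add, Prod.smul_fst, Prod.fst_sub, smul_eq_mul]
    field_simp [(sub_pos.2 hcd).ne']
    ring
  · simp

lemma Set.EqOn.eventuallyEq_nhdsWithin_of_notMem_Icc {x : ℝ → ℝ} (h : EqOn x g (S \ Ioo c d))
    (ht : t ∉ Icc c d) : x =ᶠ[𝓝[S] t] g := by
  filter_upwards [inter_mem_nhdsWithin S (isClosed_Icc.isOpen_compl.mem_nhds ht)] with s hs
  exact h ⟨hs.1, fun h' => hs.2 (Ioo_subset_Icc_self h')⟩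

namespace ConvexOn

lemma le_chord (hg : ConvexOn ℝ S g) (hc : c ∈ S) (hd : d ∈ S) (ht : t ∈ Icc c d) :
    g t ≤ chord g c d t := by
  rcases ht.1.eq_or_lt with rfl | hct
  · simp [chord]
  have hslope : slope g c t ≤ slope g c d := hg.slope_mono hc
    ⟨hg.1.ordConnected.out hc hd ht, hct.ne'⟩ ⟨hd, (hct.trans_le ht.2).ne'⟩ ht.2
  have key := sub_smul_slope g c t
  simp only [smul_eq_mul, vsub_eq_sub] at key
  have := mul_le_mul_of_nonneg_left hslope (sub_nonneg.2 ht.1)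
  simp only [chord]
  linarith

lemma chord_le (hg : ConvexOn ℝ S g) (hc : c ∈ S) (hd : d ∈ S) (hcd : c < d)
    (ht : t ∈ S \ Ioo c d) : chord g c d t ≤ g t := by
  have key := sub_smul_slope g c t
  simp only [smul_eq_mul, vsub_eq_sub] at key
  simp only [chord]
  rcases lt_trichotomy t c with htc | rfl | hct
  · have hslope : slope g c t ≤ slope g c d :=
      hg.slope_mono hc ⟨ht.1, htc.ne⟩ ⟨hd, hcd.ne'⟩ (htc.trans hcd).le
    nlinarith
  · simp
  · have hdt : d ≤ t := not_lt.1 fun h => ht.2 ⟨hct, h⟩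
    have hslope : slope g c d ≤ slope g c t :=
      hg.slope_mono hc ⟨hd, hcd.ne'⟩ ⟨ht.1, hct.ne'⟩ hdt
    nlinarith

lemma sup_chord_eqOn_diff (hg : ConvexOn ℝ S g) (hc : c ∈ S) (hd : d ∈ S) (hcd : c < d) :
    EqOn (g ⊔ chord g c d) g (S \ Ioo c d) := fun _ ht =>
  sup_eq_left.2 (hg.chord_le hc hd hcd ht)

lemma sup_chord_eqOn_Icc (hg : ConvexOn ℝ S g) (hc : c ∈ S) (hd : d ∈ S) :
    EqOn (g ⊔ chord g c d) (chord g c d) (Icc c d) := fun _ ht =>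
  sup_eq_right.2 (hg.le_chord hc hd ht)

lemma derivWithin_sup_chord (hg : ConvexOn ℝ S g) (hcdS : Icc c d ⊆ S) (ht : t ∈ Ioo c d) :
    derivWithin (g ⊔ chord g c d) S t = slope g c d := by
  have hcd := Icc_mem_nhds ht.1 ht.2
  rw [derivWithin_of_mem_nhds (mem_of_superset hcd hcdS)]
  refine (hasDerivAt_chord.congr_of_eventuallyEq ?_).deriv
  filter_upwards [hcd] with s hs
  exact hg.sup_chord_eqOn_Icc (hcdS (left_mem_Icc.2 (ht.1.trans ht.2).le))
    (hcdS (right_mem_Icc.2 (ht.1.trans ht.2).le)) hs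

lemma hasDerivWithinAt_sup_chord (hg : ConvexOn ℝ S g) (hc : c ∈ S) (hd : d ∈ S)
    (hcd : c < d) (ht : t ∈ S) (htcd : t ∉ Icc c d) (h : HasDerivWithinAt g g' S t) :
    HasDerivWithinAt (g ⊔ chord g c d) g' S t :=
  h.congr_of_eventuallyEq
    ((hg.sup_chord_eqOn_diff hc hd hcd).eventuallyEq_nhdsWithin_of_notMem_Icc htcd)
    (hg.sup_chord_eqOn_diff hc hd hcd ⟨ht, fun h' => htcd (Ioo_subset_Icc_self h')⟩)

lemma prodMk_sup_chord_mem (hg : ConvexOn ℝ S g) {U : Set (ℝ × ℝ)} (hU : Convex ℝ U)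
    (hgU : ∀ s ∈ S, (s, g s) ∈ U) (hc : c ∈ S) (hd : d ∈ S) (hcd : c < d) (ht : t ∈ S) :
    (t, (g ⊔ chord g c d) t) ∈ U := by
  by_cases htcd : t ∈ Icc c d
  · rw [hg.sup_chord_eqOn_Icc hc hd htcd]
    exact hU.prodMk_chord_mem (hgU c hc) (hgU d hd) hcd htcd
  · rw [hg.sup_chord_eqOn_diff hc hd hcd ⟨ht, fun h => htcd (Ioo_subset_Icc_self h)⟩]
    exact hgU t ht

end ConvexOn

noncomputable def variationalIntegral (f : ℝ × ℝ × ℝ → ℝ) (a b : ℝ) (x : ℝ → ℝ) : ℝ :=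
  ∫ t in Icc a b, f (t, x t, derivWithin x (Icc a b) t)

variable {a b d₀ d₁ : ℝ} {f : ℝ × ℝ × ℝ → ℝ}

lemma variationalIntegral_sub_eq_intervalIntegral {x : ℝ → ℝ}
    (hx : IntegrableOn (fun t => f (t, x t, derivWithin x (Icc a b) t)) (Icc a b))
    (hg : IntegrableOn (fun t => f (t, g t, derivWithin g (Icc a b) t)) (Icc a b))
    (hcd : c ≤ d) (hcdS : Icc c d ⊆ Icc a b) (h : EqOn x g (Icc a b \ Ioo c d)) :
    variationalIntegral f a b x - variationalIntegral f a b g =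
      ∫ t in c..d, (f (t, x t, derivWithin x (Icc a b) t) -
        f (t, g t, derivWithin g (Icc a b) t)) := by
  rw [variationalIntegral, variationalIntegral, ← integral_sub hx hg,
    setIntegral_eq_of_subset_of_forall_sdiff_eq_zero measurableSet_Icc hcdS,
    integral_Icc_eq_integral_Ioc, ← intervalIntegral.integral_of_le hcd]
  rintro t ⟨ht, htcd⟩
  have hxt := h ⟨ht, fun h' => htcd (Ioo_subset_Icc_self h')⟩
  rw [hxt, (h.eventuallyEq_nhdsWithin_of_notMem_Icc htcd).derivWithin_eq hxt, sub_self]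

lemma intervalIntegral_le_of_ae_le_const {φ : ℝ → ℝ} {C : ℝ} (hcd : c ≤ d)
    (hφ : IntervalIntegrable φ volume c d) (h : ∀ᵐ t, t ∈ Ioo c d → φ t ≤ C) :
    ∫ t in c..d, φ t ≤ (d - c) * C := by
  rw [intervalIntegral.integral_of_le hcd, integral_Ioc_eq_integral_Ioo]
  calc ∫ t in Ioo c d, φ t ≤ ∫ _ in Ioo c d, C :=
        setIntegral_mono_on_ae (hφ.1.mono_set Ioo_subset_Ioc_self) (integrableOn_const
          measure_Ioo_lt_top.ne) measurableSet_Ioo h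
    _ = (d - c) * C := by rw [setIntegral_const, Real.volume_real_Ioo_of_le hcd, smul_eq_mul]

lemma ConvexOn.variationalIntegral_sup_chord_sub_le (hf : Continuous f)
    (hg : ConvexOn ℝ (Icc a b) g) (h₀ : HasDerivWithinAt g d₀ (Icc a b) a)
    (h₁ : HasDerivWithinAt g d₁ (Icc a b) b) {τ A B M : ℝ} (hac : a < c) (hcτ : c < τ)
    (hτd : τ < d) (hdb : d < b)
    (hA : ∀ t ∈ Ioo c τ, A ≤ f (t, g t, derivWithin g (Ioi t) t))
    (hB : ∀ t ∈ Ioo τ d, B ≤ f (t, g t, derivWithin g (Ioi t) t))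
    (hM : ∀ t ∈ Ioo c d, f (t, chord g c d t, slope g c d) ≤ M) :
    variationalIntegral f a b (g ⊔ chord g c d) - variationalIntegral f a b g ≤
      (τ - c) * (M - A) + (d - τ) * (M - B) := by
  have hab : a < b := hac.trans (hcτ.trans (hτd.trans hdb))
  have hcd : c < d := hcτ.trans hτd
  have hcdS : Icc c d ⊆ Icc a b := Icc_subset_Icc hac.le hdb.le
  have hcS : c ∈ Icc a b := hcdS (left_mem_Icc.2 hcd.le)
  have hdS : d ∈ Icc a b := hcdS (right_mem_Icc.2 hcd.le)
  have hint_g := hg.integrableOn_comp_derivWithin hab h₀ h₁ hf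
  have hint_x := (hg.sup (convexOn_chord (convex_Icc a b))).integrableOn_comp_derivWithin hab
    (hg.hasDerivWithinAt_sup_chord hcS hdS hcd (left_mem_Icc.2 hab.le)
      (fun h => hac.not_ge h.1) h₀)
    (hg.hasDerivWithinAt_sup_chord hcS hdS hcd (right_mem_Icc.2 hab.le)
      (fun h => hdb.not_ge h.2) h₁) hf
  set φ := fun t => f (t, (g ⊔ chord g c d) t, derivWithin (g ⊔ chord g c d) (Icc a b) t) -
    f (t, g t, derivWithin g (Icc a b) t)
  have hφ : ∀ {u v}, u ≤ v → Icc u v ⊆ Icc a b → IntervalIntegrable φ volume u v :=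
    fun huv huvS => ((hint_x.sub hint_g).mono_set (uIcc_of_le huv ▸ huvS)).intervalIntegrable
  have hφ_le : ∀ᵐ t, t ∈ Ioo c d → φ t ≤ M - f (t, g t, derivWithin g (Ioi t) t) := by
    filter_upwards [hg.ae_derivWithin_eq_rightDeriv] with t ht htcd
    simp only [φ]
    rw [hg.sup_chord_eqOn_Icc hcS hdS (Ioo_subset_Icc_self htcd),
      hg.derivWithin_sup_chord hcdS htcd,
      ht (by rw [interior_Icc]; exact ⟨hac.trans htcd.1, htcd.2.trans hdb⟩)]
    linarith [hM t htcd]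
  have hcτS : Icc c τ ⊆ Icc a b := (Icc_subset_Icc_right hτd.le).trans hcdS
  have hτdS : Icc τ d ⊆ Icc a b := (Icc_subset_Icc_left hcτ.le).trans hcdS
  rw [variationalIntegral_sub_eq_intervalIntegral hint_x hint_g hcd.le hcdS
      (hg.sup_chord_eqOn_diff hcS hdS hcd),
    ← intervalIntegral.integral_add_adjacent_intervals (hφ hcτ.le hcτS) (hφ hτd.le hτdS)]
  refine add_le_add (intervalIntegral_le_of_ae_le_const hcτ.le (hφ hcτ.le hcτS) ?_)
    (intervalIntegral_le_of_ae_le_const hτd.le (hφ hτd.le hτdS) ?_)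
  · filter_upwards [hφ_le] with t ht htI
    linarith [ht ⟨htI.1, htI.2.trans hτd⟩, hA t htI]
  · filter_upwards [hφ_le] with t ht htI
    linarith [ht ⟨hcτ.trans htI.1, htI.2⟩, hB t htI]

lemma tendsto_slope_sub_add {p q : ℝ} (hp : HasDerivWithinAt g p (Iio t) t)
    (hq : HasDerivWithinAt g q (Ioi t) t) :
    Tendsto (fun ε => slope g (t - ε) (t + ε)) (𝓝[>] 0) (𝓝 ((p + q) / 2)) := by
  have hsub : Tendsto (fun ε => t - ε) (𝓝[>] 0) (𝓝[<] t) := tendsto_nhdsWithin_iff.2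
    ⟨((continuous_sub_left t).tendsto' 0 t (sub_zero t)).mono_left nhdsWithin_le_nhds,
      eventually_nhdsWithin_of_forall fun ε hε => sub_lt_self t hε⟩
  have hadd : Tendsto (fun ε => t + ε) (𝓝[>] 0) (𝓝[>] t) := tendsto_nhdsWithin_iff.2
    ⟨((continuous_const_add t).tendsto' 0 t (add_zero t)).mono_left nhdsWithin_le_nhds,
      eventually_nhdsWithin_of_forall fun ε hε => lt_add_of_pos_right t hε⟩
  have hp' : Tendsto (slope g t) (𝓝[<] t) (𝓝 p) := by
    simpa using hasDerivWithinAt_iff_tendsto_slope.1 hp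
  have hq' : Tendsto (slope g t) (𝓝[>] t) (𝓝 q) := by
    simpa using hasDerivWithinAt_iff_tendsto_slope.1 hq
  refine (((hp'.comp hsub).add (hq'.comp hadd)).div_const 2).congr' ?_
  filter_upwards [self_mem_nhdsWithin] with ε (hε : 0 < ε)
  simp only [Function.comp, slope_def_field]
  rw [show t - ε - t = -ε by ring, show t + ε - t = ε by ring,
    show t + ε - (t - ε) = 2 * ε by ring]
  field_simp
  ring

lemma eventually_lt_comp_chord {m M : ℝ} (hf : ContinuousAt f (t, g t, m)) (hg : ContinuousAt g t)
    (hm : Tendsto (fun ε => slope g (t - ε) (t + ε)) (𝓝[>] 0) (𝓝 m)) (hM : f (t, g t, m) < M) :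
    ∀ᶠ ε in 𝓝[>] 0, ∀ s ∈ Icc (t - ε) (t + ε),
      f (s, chord g (t - ε) (t + ε) s, slope g (t - ε) (t + ε)) < M := by
  obtain ⟨r, hr, hball⟩ := Metric.mem_nhds_iff.1 (hf.eventually (gt_mem_nhds hM))
  have hsub : Tendsto (fun ε => g (t - ε)) (𝓝[>] 0) (𝓝 (g t)) :=
    (hg.tendsto.comp ((continuous_sub_left t).tendsto' 0 t (sub_zero t))).mono_left
      nhdsWithin_le_nhds
  have hadd : Tendsto (fun ε => g (t + ε)) (𝓝[>] 0) (𝓝 (g t)) :=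
    (hg.tendsto.comp ((continuous_const_add t).tendsto' 0 t (add_zero t))).mono_left
      nhdsWithin_le_nhds
  filter_upwards [self_mem_nhdsWithin, nhdsWithin_le_nhds (Iio_mem_nhds hr),
    hsub.eventually (Metric.ball_mem_nhds _ hr), hadd.eventually (Metric.ball_mem_nhds _ hr),
    hm.eventually (Metric.ball_mem_nhds _ hr)] with ε (hε : 0 < ε) (hεr : ε < r) h₁ h₂ h₃ s hs
  have hchord : chord g (t - ε) (t + ε) s ∈ Metric.ball (g t) r :=
    (convex_ball _ _).segment_subset h₁ h₂
      (by rw [segment_eq_uIcc]; exact chord_mem_uIcc (by linarith) hs)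
  refine hball ?_
  rw [Metric.mem_ball, Prod.dist_eq, Prod.dist_eq, Real.dist_eq]
  refine max_lt ?_ (max_lt hchord h₃)
  rw [abs_lt]; constructor <;> linarith [hs.1, hs.2]

lemma eventually_forall_Ioo_sub_of_nhdsLT {P : ℝ → Prop} (h : ∀ᶠ s in 𝓝[<] t, P s) :
    ∀ᶠ ε in 𝓝[>] 0, ∀ s ∈ Ioo (t - ε) t, P s := by
  obtain ⟨c, hc, hsub⟩ := mem_nhdsLT_iff_exists_Ioo_subset.1 h
  filter_upwards [Ioo_mem_nhdsGT (sub_pos.2 hc)] with ε hε s hs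
  exact hsub ⟨by linarith [hε.2, hs.1], hs.2⟩

lemma eventually_forall_Ioo_add_of_nhdsGT {P : ℝ → Prop} (h : ∀ᶠ s in 𝓝[>] t, P s) :
    ∀ᶠ ε in 𝓝[>] 0, ∀ s ∈ Ioo t (t + ε), P s := by
  obtain ⟨c, hc, hsub⟩ := mem_nhdsGT_iff_exists_Ioo_subset.1 h
  filter_upwards [Ioo_mem_nhdsGT (sub_pos.2 hc)] with ε hε s hs
  exact hsub ⟨hs.1, by linarith [hε.2, hs.2]⟩

lemma eventually_lt_sub_and_add_lt (ht : t ∈ Ioo a b) :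
    ∀ᶠ ε in 𝓝[>] 0, a < t - ε ∧ t + ε < b := by
  filter_upwards [nhdsWithin_le_nhds (Iio_mem_nhds (sub_pos.2 ht.1)),
    nhdsWithin_le_nhds (Iio_mem_nhds (sub_pos.2 ht.2))] with ε (h₁ : ε < t - a) (h₂ : ε < b - t)
  exact ⟨by linarith, by linarith⟩

namespace ConvexOn

lemma tendsto_comp_rightDeriv_nhdsLT (hg : ConvexOn ℝ S g) (ht : t ∈ interior S)
    (hf : ContinuousAt f (t, g t, derivWithin g (Iio t) t)) :
    Tendsto (fun s => f (s, g s, derivWithin g (Ioi s) s)) (𝓝[<] t)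
      (𝓝 (f (t, g t, derivWithin g (Iio t) t))) :=
  hf.tendsto.comp ((tendsto_id.mono_left nhdsWithin_le_nhds).prodMk_nhds
    (((hg.continuousOn_interior.continuousAt (isOpen_interior.mem_nhds ht)).tendsto.mono_left
      nhdsWithin_le_nhds).prodMk_nhds (hg.tendsto_rightDeriv_nhdsLT ht)))

lemma tendsto_comp_rightDeriv_nhdsGT (hg : ConvexOn ℝ S g) (ht : t ∈ interior S)
    (hf : ContinuousAt f (t, g t, derivWithin g (Ioi t) t)) :
    Tendsto (fun s => f (s, g s, derivWithin g (Ioi s) s)) (𝓝[>] t)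
      (𝓝 (f (t, g t, derivWithin g (Ioi t) t))) :=
  hf.tendsto.comp ((tendsto_id.mono_left nhdsWithin_le_nhds).prodMk_nhds
    (((hg.continuousOn_interior.continuousAt (isOpen_interior.mem_nhds ht)).tendsto.mono_left
      nhdsWithin_le_nhds).prodMk_nhds (hg.tendsto_rightDeriv_nhdsGT ht)))

theorem leftDeriv_eq_rightDeriv_of_forall_le_variationalIntegral_sup_chord (hf : Continuous f)
    (hg : ConvexOn ℝ (Icc a b) g)
    (h₀ : HasDerivWithinAt g d₀ (Icc a b) a) (h₁ : HasDerivWithinAt g d₁ (Icc a b) b)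
    (hmin : ∀ c d, a < c → c < d → d < b →
      variationalIntegral f a b g ≤ variationalIntegral f a b (g ⊔ chord g c d))
    {τ : ℝ} (hτ : τ ∈ Ioo a b)
    (hF : StrictConvexOn ℝ (Icc (derivWithin g (Iio τ) τ) (derivWithin g (Ioi τ) τ))
      fun w => f (τ, g τ, w)) :
    derivWithin g (Iio τ) τ = derivWithin g (Ioi τ) τ := by
  have hτ' : τ ∈ interior (Icc a b) := by rwa [interior_Icc]
  set p := derivWithin g (Iio τ) τ
  set q := derivWithin g (Ioi τ) τ
  set F := fun w => f (τ, g τ, w)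
  by_contra hne
  have hpq : p < q := (hg.leftDeriv_le_rightDeriv_of_mem_interior hτ').lt_of_ne hne
  have hmid : F ((p + q) / 2) < (F p + F q) / 2 := by
    have := hF.2 (left_mem_Icc.2 hpq.le) (right_mem_Icc.2 hpq.le) hpq.ne
      (by norm_num : (0 : ℝ) < 1 / 2) (by norm_num : (0 : ℝ) < 1 / 2) (by norm_num)
    simp only [smul_eq_mul] at this
    rw [show 1 / 2 * p + 1 / 2 * q = (p + q) / 2 by ring] at this
    linarith
  set δ := ((F p + F q) / 2 - F ((p + q) / 2)) / 4
  have hδ : 0 < δ := by simp only [δ]; linarith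
  have hgτ : ContinuousAt g τ :=
    hg.continuousOn_interior.continuousAt (isOpen_interior.mem_nhds hτ')
  have hleft := eventually_forall_Ioo_sub_of_nhdsLT
    ((hg.tendsto_comp_rightDeriv_nhdsLT hτ' hf.continuousAt).eventually
      (lt_mem_nhds (sub_lt_self (F p) hδ)))
  have hright := eventually_forall_Ioo_add_of_nhdsGT
    ((hg.tendsto_comp_rightDeriv_nhdsGT hτ' hf.continuousAt).eventually
      (lt_mem_nhds (sub_lt_self (F q) hδ)))
  have hchord := eventually_lt_comp_chord hf.continuousAt hgτ
    (tendsto_slope_sub_add (hg.hasDerivWithinAt_leftDeriv_of_mem_interior hτ')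
      (hg.hasDerivWithinAt_rightDeriv_of_mem_interior hτ')) (lt_add_of_pos_right _ hδ)
  obtain ⟨ε, hε, hl, hr, hc, hac, hdb⟩ := (eventually_mem_nhdsWithin.and
    (hleft.and (hright.and (hchord.and (eventually_lt_sub_and_add_lt hτ))))).exists
  have hε : (0 : ℝ) < ε := hε
  have hle := hg.variationalIntegral_sup_chord_sub_le hf h₀ h₁ hac (sub_lt_self τ hε)
    (lt_add_of_pos_right τ hε) hdb (fun t ht => (hl t ht).le) (fun t ht => (hr t ht).le)
    (fun t ht => (hc t (Ioo_subset_Icc_self ht)).le)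
  have hcut := hmin _ _ hac (by linarith) hdb
  rw [show τ - (τ - ε) = ε by ring, show τ + ε - τ = ε by ring, ← mul_add] at hle
  have : ε * (F ((p + q) / 2) + δ - (F p - δ) + (F ((p + q) / 2) + δ - (F q - δ))) < 0 :=
    mul_neg_of_pos_of_neg hε (by simp only [δ]; linarith)
  linarith

end ConvexOn

theorem convex_minimizer_C1_general
    (U : Set (ℝ × ℝ)) (hUconv : Convex ℝ U)
    (t₀ t₁ s₀ s₁ x₀ x₁ : ℝ) (ht : t₀ < t₁)
    (f : ℝ × ℝ × ℝ → ℝ) (hf : ContDiff ℝ 2 f)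
    (xhat : ℝ → ℝ)
    (hadm : ConvexOn ℝ (Set.Icc t₀ t₁) xhat ∧
      (∀ t ∈ Set.Icc t₀ t₁, (t, xhat t) ∈ U) ∧
      xhat t₀ = x₀ ∧ xhat t₁ = x₁ ∧
      (∃ d, s₀ ≤ d ∧ HasDerivWithinAt xhat d (Set.Icc t₀ t₁) t₀) ∧
      (∃ d, d ≤ s₁ ∧ HasDerivWithinAt xhat d (Set.Icc t₀ t₁) t₁))
    (hLegendre : ∀ t ∈ Set.Icc t₀ t₁, ∀ d : ℝ,
      (∀ s ∈ Set.Icc t₀ t₁, xhat t + d * (s - t) ≤ xhat s) →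
      0 < iteratedDeriv 2 (fun w => f (t, xhat t, w)) d)
    (hopt : ∀ x : ℝ → ℝ,
      (ConvexOn ℝ (Set.Icc t₀ t₁) x ∧
        (∀ t ∈ Set.Icc t₀ t₁, (t, x t) ∈ U) ∧
        x t₀ = x₀ ∧ x t₁ = x₁ ∧
        (∃ d, s₀ ≤ d ∧ HasDerivWithinAt x d (Set.Icc t₀ t₁) t₀) ∧
        (∃ d, d ≤ s₁ ∧ HasDerivWithinAt x d (Set.Icc t₀ t₁) t₁)) →
      (∫ t in Set.Icc t₀ t₁, f (t, xhat t, derivWithin xhat (Set.Icc t₀ t₁) t)) ≤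
        ∫ t in Set.Icc t₀ t₁, f (t, x t, derivWithin x (Set.Icc t₀ t₁) t)) :
    ContDiffOn ℝ 1 xhat (Set.Icc t₀ t₁) := by
  obtain ⟨hconv, hU, rfl, rfl, ⟨d₀, hd₀, h₀⟩, ⟨d₁, hd₁, h₁⟩⟩ := hadm
  have hmin : ∀ c d, t₀ < c → c < d → d < t₁ →
      variationalIntegral f t₀ t₁ xhat ≤ variationalIntegral f t₀ t₁ (xhat ⊔ chord xhat c d) := by
    intro c d hc hcd hd
    have hcS : c ∈ Icc t₀ t₁ := ⟨hc.le, (hcd.trans hd).le⟩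
    have hdS : d ∈ Icc t₀ t₁ := ⟨(hc.trans hcd).le, hd.le⟩
    have h₀' : t₀ ∉ Icc c d := fun h => hc.not_ge h.1
    have h₁' : t₁ ∉ Icc c d := fun h => hd.not_ge h.2
    have heq := hconv.sup_chord_eqOn_diff hcS hdS hcd
    exact hopt _ ⟨hconv.sup (convexOn_chord (convex_Icc _ _)),
      fun t => hconv.prodMk_sup_chord_mem hUconv hU hcS hdS hcd,
      heq ⟨left_mem_Icc.2 ht.le, fun h => h₀' (Ioo_subset_Icc_self h)⟩,
      heq ⟨right_mem_Icc.2 ht.le, fun h => h₁' (Ioo_subset_Icc_self h)⟩,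
      ⟨d₀, hd₀, hconv.hasDerivWithinAt_sup_chord hcS hdS hcd (left_mem_Icc.2 ht.le) h₀' h₀⟩,
      ⟨d₁, hd₁, hconv.hasDerivWithinAt_sup_chord hcS hdS hcd (right_mem_Icc.2 ht.le) h₁' h₁⟩⟩
  refine hconv.contDiffOn_one_of_differentiableOn (uniqueDiffOn_Icc ht)
    (hconv.differentiableOn_Icc_of_leftDeriv_eq_rightDeriv h₀.differentiableWithinAt
      h₁.differentiableWithinAt fun τ hτ => ?_)
  have hFc : Continuous fun w => f (τ, xhat τ, w) := by have := hf.continuous; fun_prop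
  refine hconv.leftDeriv_eq_rightDeriv_of_forall_le_variationalIntegral_sup_chord hf.continuous
    h₀ h₁ hmin hτ (strictConvexOn_of_deriv2_pos (convex_Icc _ _) hFc.continuousOn fun w hw => ?_)
  rw [← iteratedDeriv_eq_iterate]
  exact hLegendre τ (Ioo_subset_Icc_self hτ) w (hconv.hasSubgradientWithinAt_of_mem_Icc
    (by rwa [interior_Icc]) (interior_subset hw))

/-- (C¹-smoothness of optimal convex solutions.) If `x̂` minimizes
`I(x) = ∫_{t₀}^{t₁} f(t, x, ẋ) dt` over convex functions on `[t₀, t₁]` with graph in `U`,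
fixed endpoint values and endpoint derivative constraints, if the graph of `x̂` lies in the
interior of `U` on `(t₀, t₁)`, and if the strong Legendre condition `f_{ẋẋ} > 0` holds on
`Γ = {(t, x̂(t), d) : d ∈ ∂x̂(t)}`, then `x̂ ∈ C¹[t₀, t₁]`. -/
theorem convex_minimizer_C1
    (U : Set (ℝ × ℝ)) (hUconv : Convex ℝ U) (hUint : (interior U).Nonempty)
    (t₀ t₁ s₀ s₁ x₀ x₁ : ℝ) (ht : t₀ < t₁) (hs : s₀ < s₁)
    (f : ℝ × ℝ × ℝ → ℝ) (hf : ContDiff ℝ 2 f)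
    (xhat : ℝ → ℝ)
    (hadm : ConvexOn ℝ (Set.Icc t₀ t₁) xhat ∧
      (∀ t ∈ Set.Icc t₀ t₁, (t, xhat t) ∈ U) ∧
      xhat t₀ = x₀ ∧ xhat t₁ = x₁ ∧
      (∃ d, s₀ ≤ d ∧ HasDerivWithinAt xhat d (Set.Icc t₀ t₁) t₀) ∧
      (∃ d, d ≤ s₁ ∧ HasDerivWithinAt xhat d (Set.Icc t₀ t₁) t₁))
    (hgraph : ∀ t ∈ Set.Ioo t₀ t₁, (t, xhat t) ∈ interior U)
    (hLegendre : ∀ t ∈ Set.Icc t₀ t₁, ∀ d : ℝ,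
      (∀ s ∈ Set.Icc t₀ t₁, xhat t + d * (s - t) ≤ xhat s) →
      0 < iteratedDeriv 2 (fun w => f (t, xhat t, w)) d)
    (hopt : ∀ x : ℝ → ℝ,
      (ConvexOn ℝ (Set.Icc t₀ t₁) x ∧
        (∀ t ∈ Set.Icc t₀ t₁, (t, x t) ∈ U) ∧
        x t₀ = x₀ ∧ x t₁ = x₁ ∧
        (∃ d, s₀ ≤ d ∧ HasDerivWithinAt x d (Set.Icc t₀ t₁) t₀) ∧
        (∃ d, d ≤ s₁ ∧ HasDerivWithinAt x d (Set.Icc t₀ t₁) t₁)) →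
      (∫ t in Set.Icc t₀ t₁, f (t, xhat t, derivWithin xhat (Set.Icc t₀ t₁) t)) ≤
        ∫ t in Set.Icc t₀ t₁, f (t, x t, derivWithin x (Set.Icc t₀ t₁) t)) :
    ContDiffOn ℝ 1 xhat (Set.Icc t₀ t₁) :=
  convex_minimizer_C1_general U hUconv t₀ t₁ s₀ s₁ x₀ x₁ ht f hf xhat hadm hLegendre hopt
end

section
/- Let τ > 0 and let x, y ∈ C²([−τ, τ], ℝ) satisfy x(0) = y(0) = ẋ(0) = ẏ(0) = 0. Assume ẍ(t) ≠ 0 and ÿ(t) ≠ 0 for all |t| ≤ τ. Then for every t with 0 < |t| ≤ τ one has x(t) ≠ 0, y(t) ≠ 0, and |ẋ(t)²/x(t) − ẏ(t)²/y(t)| ≤ (8/3) · ‖ẍ‖ ‖ÿ‖ ‖ẍ − ÿ‖ / ( inf_{|s| ≤ τ} |ẍ(s)| · inf_{|s| ≤ τ} |ÿ(s)| ). -/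
/-!
Everything rests on one comparison principle on `[-τ, τ]`: if `f 0 = 0` and `|f' u| ≤ C |u|^k`,
then `|f u| ≤ C |u|^(k+1) / (k+1)` (the left half follows from the right one by `u ↦ -u`).
Iterating it gives `|x'| ≤ ‖ẍ‖ |t|` and `|x| ≤ ‖ẍ‖ t²/2`. The Wronskian `w = x'y - y'x` has
derivative `x''y - y''x = (x'' - y'') y - y'' (x - y) = O(‖ÿ‖ ‖ẍ - ÿ‖ t²)`, so `w = O(|t|³)`, and
then the numerator `n = x'²y - y'²x` of `x'²/x - y'²/y` has `|n'| ≤ (8/3) ‖ẍ‖ ‖ÿ‖ ‖ẍ - ÿ‖ |t|³`,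
whence `|n| ≤ (2/3) ‖ẍ‖ ‖ÿ‖ ‖ẍ - ÿ‖ t⁴`. On the other side `ẍ` has constant sign, so
`|x t| ≥ inf |ẍ| · t²/2`, and likewise for `y`; dividing gives the constant `4 · 2/3 = 8/3`.
-/

open Set

section

variable {f f' f'' : ℝ → ℝ} {a b τ c C : ℝ} {k : ℕ}

theorem image_le_of_hasDerivWithinAt_Icc_of_deriv_le {g g' : ℝ → ℝ}
    (hf : ∀ u ∈ Icc a b, HasDerivWithinAt f (f' u) (Icc a b) u)
    (hg : ∀ u ∈ Icc a b, HasDerivWithinAt g (g' u) (Icc a b) u)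
    (ha : f a ≤ g a) (hle : ∀ u ∈ Icc a b, f' u ≤ g' u) :
    ∀ u ∈ Icc a b, f u ≤ g u := fun _ hu =>
  image_le_of_deriv_right_le_deriv_boundary (fun u hu => (hf u hu).continuousWithinAt)
    (fun u hu => (hf u (Ico_subset_Icc_self hu)).mono_of_mem_nhdsWithin
      (Icc_mem_nhdsGE_of_mem hu))
    ha (fun u hu => (hg u hu).continuousWithinAt)
    (fun u hu => (hg u (Ico_subset_Icc_self hu)).mono_of_mem_nhdsWithin
      (Icc_mem_nhdsGE_of_mem hu))
    (fun u hu => hle u (Ico_subset_Icc_self hu)) hu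

theorem hasDerivAt_mul_pow_succ_div (c u : ℝ) (k : ℕ) :
    HasDerivAt (fun v => c * v ^ (k + 1) / (k + 1)) (c * u ^ k) u := by
  refine (((hasDerivAt_pow (k + 1) u).const_mul c).div_const ((k : ℝ) + 1)).congr_deriv ?_
  push_cast
  field_simp

theorem mul_pow_succ_div_le_of_mul_pow_le_deriv
    (hf : ∀ u ∈ Icc 0 b, HasDerivWithinAt f (f' u) (Icc 0 b) u) (h0 : f 0 = 0)
    (hle : ∀ u ∈ Icc 0 b, c * u ^ k ≤ f' u) :
    ∀ u ∈ Icc 0 b, c * u ^ (k + 1) / (k + 1) ≤ f u :=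
  image_le_of_hasDerivWithinAt_Icc_of_deriv_le
    (fun u _ => (hasDerivAt_mul_pow_succ_div c u k).hasDerivWithinAt) hf (by simp [h0]) hle

theorem abs_le_mul_pow_succ_div_of_abs_deriv_le_of_nonneg
    (hf : ∀ u ∈ Icc 0 b, HasDerivWithinAt f (f' u) (Icc 0 b) u) (h0 : f 0 = 0)
    (hle : ∀ u ∈ Icc 0 b, |f' u| ≤ C * u ^ k) :
    ∀ u ∈ Icc 0 b, |f u| ≤ C * u ^ (k + 1) / (k + 1) := by
  intro u hu
  have lower := mul_pow_succ_div_le_of_mul_pow_le_deriv (c := -C) hf h0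
    (fun v hv => by linarith [neg_abs_le (f' v), hle v hv]) u hu
  have upper := mul_pow_succ_div_le_of_mul_pow_le_deriv (c := -C) (f := fun v => -f v)
    (fun v hv => (hf v hv).neg)
    (by simp [h0]) (fun v hv => by linarith [le_abs_self (f' v), hle v hv]) u hu
  simp only [neg_mul, neg_div, neg_le_neg_iff] at lower upper
  exact abs_le.2 ⟨lower, upper⟩

theorem neg_mem_Icc_neg_self {u : ℝ} (hu : u ∈ Icc (-τ) τ) : -u ∈ Icc (-τ) τ :=
  ⟨neg_le_neg hu.2, neg_le.1 hu.1⟩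

theorem hasDerivWithinAt_comp_neg_Icc
    (hf : ∀ u ∈ Icc (-τ) τ, HasDerivWithinAt f (f' u) (Icc (-τ) τ) u) :
    ∀ u ∈ Icc (-τ) τ, HasDerivWithinAt (fun v => f (-v)) (-f' (-u)) (Icc (-τ) τ) u := by
  intro u hu
  have := (hf (-u) (neg_mem_Icc_neg_self hu)).comp u (hasDerivAt_neg u).hasDerivWithinAt
    fun _ => neg_mem_Icc_neg_self
  rw [mul_neg_one] at this
  exact this

theorem abs_le_mul_abs_pow_succ_div_of_abs_deriv_le
    (hf : ∀ u ∈ Icc (-τ) τ, HasDerivWithinAt f (f' u) (Icc (-τ) τ) u) (h0 : f 0 = 0)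
    (hle : ∀ u ∈ Icc (-τ) τ, |f' u| ≤ C * |u| ^ k) :
    ∀ u ∈ Icc (-τ) τ, |f u| ≤ C * |u| ^ (k + 1) / (k + 1) := by
  intro u hu
  have hsub : Icc 0 τ ⊆ Icc (-τ) τ := Icc_subset_Icc_left (by linarith [hu.1, hu.2])
  have nonneg_side : ∀ {g g' : ℝ → ℝ},
      (∀ v ∈ Icc (-τ) τ, HasDerivWithinAt g (g' v) (Icc (-τ) τ) v) → g 0 = 0 →
      (∀ v ∈ Icc (-τ) τ, |g' v| ≤ C * |v| ^ k) →
      ∀ v ∈ Icc 0 τ, |g v| ≤ C * |v| ^ (k + 1) / (k + 1) := by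
    intro g g' hg hg0 hgle v hv
    rw [abs_of_nonneg hv.1]
    refine abs_le_mul_pow_succ_div_of_abs_deriv_le_of_nonneg
      (fun w hw => (hg w (hsub hw)).mono hsub) hg0 (fun w hw => ?_) v hv
    simpa [abs_of_nonneg hw.1] using hgle w (hsub hw)
  rcases le_total 0 u with h | h
  · exact nonneg_side hf h0 hle u ⟨h, hu.2⟩
  · simpa using nonneg_side (hasDerivWithinAt_comp_neg_Icc hf) (by simp [h0])
      (fun v hv => by simpa using hle (-v) (neg_mem_Icc_neg_self hv))
      (-u) ⟨by linarith, by linarith [hu.1]⟩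

theorem mul_sq_div_two_le_of_le_deriv2_of_nonneg
    (hf : ∀ u ∈ Icc 0 b, HasDerivWithinAt f (f' u) (Icc 0 b) u)
    (hf' : ∀ u ∈ Icc 0 b, HasDerivWithinAt f' (f'' u) (Icc 0 b) u)
    (h0 : f 0 = 0) (h0' : f' 0 = 0) (hle : ∀ u ∈ Icc 0 b, c ≤ f'' u) :
    ∀ u ∈ Icc 0 b, c * u ^ 2 / 2 ≤ f u := by
  have first := mul_pow_succ_div_le_of_mul_pow_le_deriv (k := 0) hf' h0' (by simpa using hle)
  have second := mul_pow_succ_div_le_of_mul_pow_le_deriv (k := 1) hf h0 (by simpa using first)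
  simpa [one_add_one_eq_two] using second

theorem mul_sq_div_two_le_of_le_deriv2
    (hf : ∀ u ∈ Icc (-τ) τ, HasDerivWithinAt f (f' u) (Icc (-τ) τ) u)
    (hf' : ∀ u ∈ Icc (-τ) τ, HasDerivWithinAt f' (f'' u) (Icc (-τ) τ) u)
    (h0 : f 0 = 0) (h0' : f' 0 = 0) (hle : ∀ u ∈ Icc (-τ) τ, c ≤ f'' u) :
    ∀ u ∈ Icc (-τ) τ, c * u ^ 2 / 2 ≤ f u := by
  intro u hu
  have hsub : Icc 0 τ ⊆ Icc (-τ) τ := Icc_subset_Icc_left (by linarith [hu.1, hu.2])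
  have nonneg_side : ∀ {g g' g'' : ℝ → ℝ},
      (∀ v ∈ Icc (-τ) τ, HasDerivWithinAt g (g' v) (Icc (-τ) τ) v) →
      (∀ v ∈ Icc (-τ) τ, HasDerivWithinAt g' (g'' v) (Icc (-τ) τ) v) → g 0 = 0 → g' 0 = 0 →
      (∀ v ∈ Icc (-τ) τ, c ≤ g'' v) → ∀ v ∈ Icc 0 τ, c * v ^ 2 / 2 ≤ g v :=
    fun hg hg' hg0 hg0' hgle => mul_sq_div_two_le_of_le_deriv2_of_nonneg
      (fun w hw => (hg w (hsub hw)).mono hsub) (fun w hw => (hg' w (hsub hw)).mono hsub)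
      hg0 hg0' (fun w hw => hgle w (hsub hw))
  rcases le_total 0 u with h | h
  · exact nonneg_side hf hf' h0 h0' hle u ⟨h, hu.2⟩
  · simpa using nonneg_side (hasDerivWithinAt_comp_neg_Icc hf)
      (fun v hv => (hasDerivWithinAt_comp_neg_Icc hf' v hv).neg) (by simp [h0]) (by simp [h0'])
      (fun v hv => by simpa using hle (-v) (neg_mem_Icc_neg_self hv))
      (-u) ⟨by linarith, by linarith [hu.1]⟩

theorem abs_le_mul_abs_of_abs_deriv_le
    (hf : ∀ u ∈ Icc (-τ) τ, HasDerivWithinAt f (f' u) (Icc (-τ) τ) u) (h0 : f 0 = 0)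
    (hle : ∀ u ∈ Icc (-τ) τ, |f' u| ≤ C) :
    ∀ u ∈ Icc (-τ) τ, |f u| ≤ C * |u| := by
  simpa using abs_le_mul_abs_pow_succ_div_of_abs_deriv_le (k := 0) hf h0 (by simpa using hle)

theorem abs_le_mul_sq_div_two_of_abs_deriv2_le
    (hf : ∀ u ∈ Icc (-τ) τ, HasDerivWithinAt f (f' u) (Icc (-τ) τ) u)
    (hf' : ∀ u ∈ Icc (-τ) τ, HasDerivWithinAt f' (f'' u) (Icc (-τ) τ) u)
    (h0 : f 0 = 0) (h0' : f' 0 = 0) (hle : ∀ u ∈ Icc (-τ) τ, |f'' u| ≤ C) :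
    ∀ u ∈ Icc (-τ) τ, |f u| ≤ C * |u| ^ 2 / 2 := by
  intro u hu
  convert abs_le_mul_abs_pow_succ_div_of_abs_deriv_le (k := 1) hf h0
    (by simpa using abs_le_mul_abs_of_abs_deriv_le hf' h0' hle) u hu using 2
  norm_num

theorem mul_sq_div_two_le_abs_of_le_abs_deriv2
    (hf : ∀ u ∈ Icc (-τ) τ, HasDerivWithinAt f (f' u) (Icc (-τ) τ) u)
    (hf' : ∀ u ∈ Icc (-τ) τ, HasDerivWithinAt f' (f'' u) (Icc (-τ) τ) u)
    (hcont : ContinuousOn f'' (Icc (-τ) τ)) (hne : ∀ u ∈ Icc (-τ) τ, f'' u ≠ 0)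
    (h0 : f 0 = 0) (h0' : f' 0 = 0) (hle : ∀ u ∈ Icc (-τ) τ, c ≤ |f'' u|) :
    ∀ u ∈ Icc (-τ) τ, c * u ^ 2 / 2 ≤ |f u| := by
  intro u hu
  rcases isPreconnected_Icc.eq_or_eq_neg_of_sq_eq hcont hcont.abs (fun v _ => by simp [sq_abs])
    (fun hv => abs_ne_zero.2 (hne _ hv)) with hpos | hneg
  · refine (mul_sq_div_two_le_of_le_deriv2 hf hf' h0 h0' (fun v hv => ?_) u hu).trans
      (le_abs_self _)
    exact (hle v hv).trans_eq (hpos hv).symm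
  · refine (mul_sq_div_two_le_of_le_deriv2 (f := fun v => -f v) (fun v hv => (hf v hv).neg)
      (fun v hv => (hf' v hv).neg) (by simp [h0]) (by simp [h0']) (fun v hv => ?_) u hu).trans
      (neg_le_abs _)
    rw [hneg hv]
    simpa using hle v hv

theorem sInf_image_Icc_pos {g : ℝ → ℝ} (hg : ContinuousOn g (Icc a b)) (hab : a ≤ b)
    (hpos : ∀ u ∈ Icc a b, 0 < g u) : 0 < sInf (g '' Icc a b) := by
  obtain ⟨u, hu, hmin⟩ := isCompact_Icc.exists_sInf_image_eq (nonempty_Icc.2 hab) hg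
  exact hmin ▸ hpos u hu

end

section

variable {τ A B D : ℝ} {x y x' y' x'' y'' : ℝ → ℝ}

theorem abs_wronskian_le
    (hx1 : ∀ u ∈ Icc (-τ) τ, HasDerivWithinAt x (x' u) (Icc (-τ) τ) u)
    (hx2 : ∀ u ∈ Icc (-τ) τ, HasDerivWithinAt x' (x'' u) (Icc (-τ) τ) u)
    (hy1 : ∀ u ∈ Icc (-τ) τ, HasDerivWithinAt y (y' u) (Icc (-τ) τ) u)
    (hy2 : ∀ u ∈ Icc (-τ) τ, HasDerivWithinAt y' (y'' u) (Icc (-τ) τ) u)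
    (hx0 : x 0 = 0) (hy0 : y 0 = 0) (hx'0 : x' 0 = 0) (hy'0 : y' 0 = 0)
    (hB : ∀ u ∈ Icc (-τ) τ, |y'' u| ≤ B) (hD : ∀ u ∈ Icc (-τ) τ, |x'' u - y'' u| ≤ D) :
    ∀ u ∈ Icc (-τ) τ, |x' u * y u - y' u * x u| ≤ B * D * |u| ^ 3 / 3 := by
  have hy := abs_le_mul_sq_div_two_of_abs_deriv2_le hy1 hy2 hy0 hy'0 hB
  have hxy := abs_le_mul_sq_div_two_of_abs_deriv2_le (fun u hu => (hx1 u hu).sub (hy1 u hu))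
    (fun u hu => (hx2 u hu).sub (hy2 u hu)) (by simp [hx0, hy0]) (by simp [hx'0, hy'0]) hD
  have hderiv : ∀ u ∈ Icc (-τ) τ, HasDerivWithinAt (fun v => x' v * y v - y' v * x v)
      (x'' u * y u - y'' u * x u) (Icc (-τ) τ) u := fun u hu =>
    (((hx2 u hu).mul (hy1 u hu)).sub ((hy2 u hu).mul (hx1 u hu))).congr_deriv (by ring)
  have hbound : ∀ u ∈ Icc (-τ) τ, |x'' u * y u - y'' u * x u| ≤ B * D * |u| ^ 2 := by
    intro u hu
    have hB0 : 0 ≤ B := (abs_nonneg _).trans (hB u hu)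
    have hD0 : 0 ≤ D := (abs_nonneg _).trans (hD u hu)
    calc |x'' u * y u - y'' u * x u|
        = |(x'' u - y'' u) * y u - y'' u * (x u - y u)| := by congr 1; ring
      _ ≤ |x'' u - y'' u| * |y u| + |y'' u| * |x u - y u| := by
        rw [← abs_mul, ← abs_mul]; exact abs_sub _ _
      _ ≤ D * (B * |u| ^ 2 / 2) + B * (D * |u| ^ 2 / 2) := by
        gcongr
        exacts [hD u hu, hy u hu, hB u hu, hxy u hu]
      _ = B * D * |u| ^ 2 := by ring
  intro u hu
  convert abs_le_mul_abs_pow_succ_div_of_abs_deriv_le (k := 2) hderiv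
    (by simp [hx0, hy0]) hbound u hu using 2
  norm_num

theorem abs_numerator_le
    (hx1 : ∀ u ∈ Icc (-τ) τ, HasDerivWithinAt x (x' u) (Icc (-τ) τ) u)
    (hx2 : ∀ u ∈ Icc (-τ) τ, HasDerivWithinAt x' (x'' u) (Icc (-τ) τ) u)
    (hy1 : ∀ u ∈ Icc (-τ) τ, HasDerivWithinAt y (y' u) (Icc (-τ) τ) u)
    (hy2 : ∀ u ∈ Icc (-τ) τ, HasDerivWithinAt y' (y'' u) (Icc (-τ) τ) u)
    (hx0 : x 0 = 0) (hy0 : y 0 = 0) (hx'0 : x' 0 = 0) (hy'0 : y' 0 = 0)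
    (hA : ∀ u ∈ Icc (-τ) τ, |x'' u| ≤ A) (hB : ∀ u ∈ Icc (-τ) τ, |y'' u| ≤ B)
    (hD : ∀ u ∈ Icc (-τ) τ, |x'' u - y'' u| ≤ D) :
    ∀ u ∈ Icc (-τ) τ, |x' u ^ 2 * y u - y' u ^ 2 * x u| ≤ 2 / 3 * (A * B * D) * |u| ^ 4 := by
  have hw := abs_wronskian_le hx1 hx2 hy1 hy2 hx0 hy0 hx'0 hy'0 hB hD
  have hx := abs_le_mul_sq_div_two_of_abs_deriv2_le hx1 hx2 hx0 hx'0 hA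
  have hx' := abs_le_mul_abs_of_abs_deriv_le hx2 hx'0 hA
  have hy' := abs_le_mul_abs_of_abs_deriv_le hy2 hy'0 hB
  have hxy' := abs_le_mul_abs_of_abs_deriv_le (fun u hu => (hx2 u hu).sub (hy2 u hu))
    (by simp [hx'0, hy'0]) hD
  -- grouped so that every term is a product of factors bounded above
  have hderiv : ∀ u ∈ Icc (-τ) τ, HasDerivWithinAt (fun v => x' v ^ 2 * y v - y' v ^ 2 * x v)
      (2 * (x'' u * (x' u * y u - y' u * x u) + y' u * x u * (x'' u - y'' u))
        + x' u * y' u * (x' u - y' u)) (Icc (-τ) τ) u := fun u hu =>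
    ((((hx2 u hu).pow 2).mul (hy1 u hu)).sub (((hy2 u hu).pow 2).mul (hx1 u hu))).congr_deriv
      (by simp only [Pi.pow_apply]; push_cast; ring)
  have hbound : ∀ u ∈ Icc (-τ) τ, |2 * (x'' u * (x' u * y u - y' u * x u)
      + y' u * x u * (x'' u - y'' u)) + x' u * y' u * (x' u - y' u)|
      ≤ 8 / 3 * (A * B * D) * |u| ^ 3 := by
    intro u hu
    have hA0 : 0 ≤ A := (abs_nonneg _).trans (hA u hu)
    have hB0 : 0 ≤ B := (abs_nonneg _).trans (hB u hu)
    have h1 : |x'' u * (x' u * y u - y' u * x u)| ≤ A * (B * D * |u| ^ 3 / 3) := by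
      rw [abs_mul]; gcongr; exacts [hA u hu, hw u hu]
    have h2 : |y' u * x u * (x'' u - y'' u)| ≤ B * |u| * (A * |u| ^ 2 / 2) * D := by
      rw [abs_mul, abs_mul]; gcongr; exacts [hy' u hu, hx u hu, hD u hu]
    have h3 : |x' u * y' u * (x' u - y' u)| ≤ A * |u| * (B * |u|) * (D * |u|) := by
      rw [abs_mul, abs_mul]; gcongr; exacts [hx' u hu, hy' u hu, hxy' u hu]
    have h1' := abs_le.1 h1
    have h2' := abs_le.1 h2
    have h3' := abs_le.1 h3
    rw [abs_le]
    constructor <;> linarith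
  intro u hu
  convert abs_le_mul_abs_pow_succ_div_of_abs_deriv_le (k := 3) hderiv
    (by simp [hx0, hy0]) hbound u hu using 1
  ring

end

theorem abs_sq_div_sub_sq_div_le {p q r s a b K t : ℝ} (ha : 0 < a) (hb : 0 < b) (ht : t ≠ 0)
    (hr : a * t ^ 2 / 2 ≤ |r|) (hs : b * t ^ 2 / 2 ≤ |s|)
    (hn : |p ^ 2 * s - q ^ 2 * r| ≤ 2 / 3 * K * |t| ^ 4) :
    |p ^ 2 / r - q ^ 2 / s| ≤ 8 / 3 * K / (a * b) := by
  have ht4 : 0 < |t| ^ 4 := by positivity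
  have hr0 : 0 < |r| := lt_of_lt_of_le (by positivity) hr
  have hs0 : 0 < |s| := lt_of_lt_of_le (by positivity) hs
  have hK : 0 ≤ K := by nlinarith [abs_nonneg (p ^ 2 * s - q ^ 2 * r)]
  have hrs : a * b * |t| ^ 4 / 4 ≤ |r| * |s| := by
    have := mul_le_mul hr hs (by positivity) hr0.le
    rw [← sq_abs t] at this
    linarith [show a * (|t| ^ 2) / 2 * (b * |t| ^ 2 / 2) = a * b * |t| ^ 4 / 4 by ring]
  rw [div_sub_div _ _ (abs_pos.1 hr0) (abs_pos.1 hs0), abs_div, abs_mul,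
    div_le_div_iff₀ (by positivity) (by positivity)]
  calc |p ^ 2 * s - r * q ^ 2| * (a * b) ≤ 2 / 3 * K * |t| ^ 4 * (a * b) := by
        rw [mul_comm r]; gcongr
    _ = 8 / 3 * K * (a * b * |t| ^ 4 / 4) := by ring
    _ ≤ 8 / 3 * K * (|r| * |s|) := by gcongr

theorem key_estimate_quotient_general
    (τ : ℝ)
    (x y x' y' x'' y'' : ℝ → ℝ)
    (hx1 : ∀ t ∈ Set.Icc (-τ) τ, HasDerivWithinAt x (x' t) (Set.Icc (-τ) τ) t)
    (hx2 : ∀ t ∈ Set.Icc (-τ) τ, HasDerivWithinAt x' (x'' t) (Set.Icc (-τ) τ) t)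
    (hy1 : ∀ t ∈ Set.Icc (-τ) τ, HasDerivWithinAt y (y' t) (Set.Icc (-τ) τ) t)
    (hy2 : ∀ t ∈ Set.Icc (-τ) τ, HasDerivWithinAt y' (y'' t) (Set.Icc (-τ) τ) t)
    (hcx : ContinuousOn x'' (Set.Icc (-τ) τ))
    (hcy : ContinuousOn y'' (Set.Icc (-τ) τ))
    (hx0 : x 0 = 0) (hy0 : y 0 = 0) (hx'0 : x' 0 = 0) (hy'0 : y' 0 = 0)
    (hxne : ∀ t ∈ Set.Icc (-τ) τ, x'' t ≠ 0)
    (hyne : ∀ t ∈ Set.Icc (-τ) τ, y'' t ≠ 0) :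
    ∀ t ∈ Set.Icc (-τ) τ, t ≠ 0 →
      x t ≠ 0 ∧ y t ≠ 0 ∧
      |x' t ^ 2 / x t - y' t ^ 2 / y t| ≤
        (8 / 3) * (sSup ((fun s => |x'' s|) '' Set.Icc (-τ) τ) *
            sSup ((fun s => |y'' s|) '' Set.Icc (-τ) τ) *
            sSup ((fun s => |x'' s - y'' s|) '' Set.Icc (-τ) τ)) /
          (sInf ((fun s => |x'' s|) '' Set.Icc (-τ) τ) *
            sInf ((fun s => |y'' s|) '' Set.Icc (-τ) τ)) := by
  intro t ht htne
  have hτ : -τ ≤ τ := ht.1.trans ht.2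
  have hx_low := mul_sq_div_two_le_abs_of_le_abs_deriv2 hx1 hx2 hcx hxne hx0 hx'0
    (fun u hu => hcx.abs.sInf_image_Icc_le hu) t ht
  have hy_low := mul_sq_div_two_le_abs_of_le_abs_deriv2 hy1 hy2 hcy hyne hy0 hy'0
    (fun u hu => hcy.abs.sInf_image_Icc_le hu) t ht
  have hx_inf := sInf_image_Icc_pos hcx.abs hτ fun u hu => abs_pos.2 (hxne u hu)
  have hy_inf := sInf_image_Icc_pos hcy.abs hτ fun u hu => abs_pos.2 (hyne u hu)
  refine ⟨abs_pos.1 ((by positivity : (0 : ℝ) < _).trans_le hx_low),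
    abs_pos.1 ((by positivity : (0 : ℝ) < _).trans_le hy_low),
    abs_sq_div_sub_sq_div_le hx_inf hy_inf htne hx_low hy_low ?_⟩
  exact abs_numerator_le hx1 hx2 hy1 hy2 hx0 hy0 hx'0 hy'0
    (fun u hu => hcx.abs.le_sSup_image_Icc hu) (fun u hu => hcy.abs.le_sSup_image_Icc hu)
    (fun u hu => (hcx.sub hcy).abs.le_sSup_image_Icc hu) t ht

/-- (Key estimate, Lemma on `ẋ²/x − ẏ²/y`.) For `x, y ∈ C²[−τ, τ]` with
`x(0) = y(0) = ẋ(0) = ẏ(0) = 0` and nonvanishing second derivatives, one has `x(t) ≠ 0`,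
`y(t) ≠ 0` for `0 < |t| ≤ τ` and
`|ẋ²/x − ẏ²/y| ≤ (8/3)‖ẍ‖‖ÿ‖‖ẍ−ÿ‖/(inf|ẍ| · inf|ÿ|)`. -/
theorem key_estimate_quotient
    (τ : ℝ) (hτ : 0 < τ)
    (x y x' y' x'' y'' : ℝ → ℝ)
    (hx1 : ∀ t ∈ Set.Icc (-τ) τ, HasDerivWithinAt x (x' t) (Set.Icc (-τ) τ) t)
    (hx2 : ∀ t ∈ Set.Icc (-τ) τ, HasDerivWithinAt x' (x'' t) (Set.Icc (-τ) τ) t)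
    (hy1 : ∀ t ∈ Set.Icc (-τ) τ, HasDerivWithinAt y (y' t) (Set.Icc (-τ) τ) t)
    (hy2 : ∀ t ∈ Set.Icc (-τ) τ, HasDerivWithinAt y' (y'' t) (Set.Icc (-τ) τ) t)
    (hcx : ContinuousOn x'' (Set.Icc (-τ) τ))
    (hcy : ContinuousOn y'' (Set.Icc (-τ) τ))
    (hx0 : x 0 = 0) (hy0 : y 0 = 0) (hx'0 : x' 0 = 0) (hy'0 : y' 0 = 0)
    (hxne : ∀ t ∈ Set.Icc (-τ) τ, x'' t ≠ 0)
    (hyne : ∀ t ∈ Set.Icc (-τ) τ, y'' t ≠ 0) :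
    ∀ t ∈ Set.Icc (-τ) τ, t ≠ 0 →
      x t ≠ 0 ∧ y t ≠ 0 ∧
      |x' t ^ 2 / x t - y' t ^ 2 / y t| ≤
        (8 / 3) * (sSup ((fun s => |x'' s|) '' Set.Icc (-τ) τ) *
            sSup ((fun s => |y'' s|) '' Set.Icc (-τ) τ) *
            sSup ((fun s => |x'' s - y'' s|) '' Set.Icc (-τ) τ)) /
          (sInf ((fun s => |x'' s|) '' Set.Icc (-τ) τ) *
            sInf ((fun s => |y'' s|) '' Set.Icc (-τ) τ)) :=
  key_estimate_quotient_general τ x y x' y' x'' y'' hx1 hx2 hy1 hy2 hcx hcy hx0 hy0 hx'0 hy'0 hxne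
    hyne
end

section
/- Let τ > 0 and let x, y ∈ C²([−τ, τ], ℝ) satisfy x(0) = y(0) = ẋ(0) = ẏ(0) = 0. Then for all |t| ≤ τ one has |ẋ(t) y(t) − x(t) ẏ(t)| ≤ (1/3) ‖ẍ‖ ‖ẍ − ÿ‖ |t|³. -/
/-!
The Wronskian `W = ẋ y - x ẏ` vanishes at `0` and `Ẇ = ẍ y - x ÿ = ẍ (y - x) + x (ẍ - ÿ)`.
Integrating a bound on the second derivative twice from `0` gives `|x t| ≤ ‖ẍ‖ t² / 2` and
`|y t - x t| ≤ ‖ẍ - ÿ‖ t² / 2`, hence `|Ẇ t| ≤ ‖ẍ‖ ‖ẍ - ÿ‖ t²`, and one more integration gives the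
bound `‖ẍ‖ ‖ẍ - ÿ‖ |t|³ / 3`.
-/

open Set

section

variable {E : Type*} [NormedAddCommGroup E] [NormedSpace ℝ E]

theorem norm_le_pow_succ_of_norm_deriv_le_pow {f f' : ℝ → E} {b C : ℝ} (n : ℕ) (hb : 0 ≤ b)
    (hf : ∀ s ∈ Icc 0 b, HasDerivWithinAt f (f' s) (Icc 0 b) s) (hf0 : f 0 = 0)
    (bound : ∀ s ∈ Icc 0 b, ‖f' s‖ ≤ C * s ^ n) :
    ‖f b‖ ≤ C / (n + 1) * b ^ (n + 1) := by
  have hB : ∀ s : ℝ, HasDerivAt (fun s => C / (n + 1) * s ^ (n + 1)) (C * s ^ n) s := fun s => by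
    refine ((hasDerivAt_pow (n + 1) s).const_mul (C / (n + 1))).congr_deriv ?_
    push_cast
    field_simp
  refine image_norm_le_of_norm_deriv_right_le_deriv_boundary
    (fun s hs => (hf s hs).continuousWithinAt)
    (fun s hs => (hf s (Ico_subset_Icc_self hs)).mono_of_mem_nhdsWithin (Icc_mem_nhdsGE_of_mem hs))
    (by simp [hf0]) hB (fun s hs => bound s (Ico_subset_Icc_self hs)) (right_mem_Icc.2 hb)

theorem norm_le_pow_succ_of_norm_deriv_le_abs_pow {f f' : ℝ → E} {τ C : ℝ} (n : ℕ)
    (hf : ∀ s ∈ Icc (-τ) τ, HasDerivWithinAt f (f' s) (Icc (-τ) τ) s) (hf0 : f 0 = 0)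
    (bound : ∀ s ∈ Icc (-τ) τ, ‖f' s‖ ≤ C * |s| ^ n) :
    ∀ t ∈ Icc (-τ) τ, ‖f t‖ ≤ C / (n + 1) * |t| ^ (n + 1) := by
  intro t ⟨htl, htr⟩
  rcases le_total 0 t with ht | ht
  · have hsub : Icc 0 t ⊆ Icc (-τ) τ := Icc_subset_Icc (by linarith) htr
    rw [abs_of_nonneg ht]
    refine norm_le_pow_succ_of_norm_deriv_le_pow n ht (fun s hs => (hf s (hsub hs)).mono hsub) hf0
      fun s hs => ?_
    simpa only [abs_of_nonneg hs.1] using bound s (hsub hs)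
  · have hneg : MapsTo (fun s : ℝ => -s) (Icc 0 (-t)) (Icc (-τ) τ) := fun s hs =>
      ⟨by linarith [hs.2], by linarith [hs.1]⟩
    rw [abs_of_nonpos ht]
    simpa using norm_le_pow_succ_of_norm_deriv_le_pow (f := fun s => f (-s))
      (f' := fun s => (-1 : ℝ) • f' (-s)) n (neg_nonneg.2 ht)
      (fun s hs => (hf (-s) (hneg hs)).scomp s (hasDerivWithinAt_neg s _) hneg) (by simpa using hf0)
      fun s hs => by simpa [abs_of_nonneg hs.1] using bound (-s) (hneg hs)

theorem norm_le_half_mul_sq_of_norm_deriv2_le {f f' f'' : ℝ → E} {τ C : ℝ}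
    (hf : ∀ s ∈ Icc (-τ) τ, HasDerivWithinAt f (f' s) (Icc (-τ) τ) s)
    (hf' : ∀ s ∈ Icc (-τ) τ, HasDerivWithinAt f' (f'' s) (Icc (-τ) τ) s)
    (hf0 : f 0 = 0) (hf'0 : f' 0 = 0) (bound : ∀ s ∈ Icc (-τ) τ, ‖f'' s‖ ≤ C) :
    ∀ t ∈ Icc (-τ) τ, ‖f t‖ ≤ C / 2 * |t| ^ 2 := by
  have hf'_le := norm_le_pow_succ_of_norm_deriv_le_abs_pow 0 hf' hf'0 (by simpa using bound)
  intro t ht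
  convert norm_le_pow_succ_of_norm_deriv_le_abs_pow 1 hf hf0 (by simpa using hf'_le) t ht using 2
  norm_num

end

theorem abs_wronskian_deriv_le {a b a'' b'' M N r : ℝ} (ha'' : |a''| ≤ M) (ha : |a| ≤ M / 2 * r)
    (hba : |b - a| ≤ N / 2 * r) (hab'' : |a'' - b''| ≤ N) :
    |a'' * b - a * b''| ≤ M * N * r := by
  have hM : 0 ≤ M := (abs_nonneg _).trans ha''
  have hMr : 0 ≤ M / 2 * r := (abs_nonneg _).trans ha
  calc |a'' * b - a * b''| = |a'' * (b - a) + a * (a'' - b'')| := by ring_nf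
    _ ≤ |a''| * |b - a| + |a| * |a'' - b''| := by rw [← abs_mul, ← abs_mul]; exact abs_add_le _ _
    _ ≤ M * (N / 2 * r) + M / 2 * r * N := by gcongr
    _ = M * N * r := by ring

theorem key_estimate_wronskian_general
    (τ : ℝ)
    (x y x' y' x'' y'' : ℝ → ℝ)
    (hx1 : ∀ t ∈ Set.Icc (-τ) τ, HasDerivWithinAt x (x' t) (Set.Icc (-τ) τ) t)
    (hx2 : ∀ t ∈ Set.Icc (-τ) τ, HasDerivWithinAt x' (x'' t) (Set.Icc (-τ) τ) t)
    (hy1 : ∀ t ∈ Set.Icc (-τ) τ, HasDerivWithinAt y (y' t) (Set.Icc (-τ) τ) t)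
    (hy2 : ∀ t ∈ Set.Icc (-τ) τ, HasDerivWithinAt y' (y'' t) (Set.Icc (-τ) τ) t)
    (hcx : ContinuousOn x'' (Set.Icc (-τ) τ))
    (hcy : ContinuousOn y'' (Set.Icc (-τ) τ))
    (hx0 : x 0 = 0) (hy0 : y 0 = 0) (hx'0 : x' 0 = 0) (hy'0 : y' 0 = 0) :
    ∀ t ∈ Set.Icc (-τ) τ,
      |x' t * y t - x t * y' t| ≤
        (1 / 3) * sSup ((fun s => |x'' s|) '' Set.Icc (-τ) τ) *
          sSup ((fun s => |x'' s - y'' s|) '' Set.Icc (-τ) τ) * |t| ^ 3 := by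
  set M := sSup ((fun s => |x'' s|) '' Icc (-τ) τ)
  set N := sSup ((fun s => |x'' s - y'' s|) '' Icc (-τ) τ)
  have hM : ∀ s ∈ Icc (-τ) τ, |x'' s| ≤ M := fun s hs =>
    le_csSup (isCompact_Icc.bddAbove_image hcx.abs) (mem_image_of_mem _ hs)
  have hN : ∀ s ∈ Icc (-τ) τ, |x'' s - y'' s| ≤ N := fun s hs =>
    le_csSup (isCompact_Icc.bddAbove_image (hcx.sub hcy).abs) (mem_image_of_mem _ hs)
  have hx := norm_le_half_mul_sq_of_norm_deriv2_le hx1 hx2 hx0 hx'0 hM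
  have hyx := norm_le_half_mul_sq_of_norm_deriv2_le (fun s hs => (hy1 s hs).sub (hx1 s hs))
    (fun s hs => (hy2 s hs).sub (hx2 s hs)) (by simp [hx0, hy0]) (by simp [hx'0, hy'0])
    (fun s hs => (abs_sub_comm _ _).trans_le (hN s hs))
  have hW : ∀ s ∈ Icc (-τ) τ, HasDerivWithinAt (fun s => x' s * y s - x s * y' s)
      (x'' s * y s - x s * y'' s) (Icc (-τ) τ) s := fun s hs =>
    (((hx2 s hs).mul (hy1 s hs)).sub ((hx1 s hs).mul (hy2 s hs))).congr_deriv (by ring)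
  intro t ht
  refine (norm_le_pow_succ_of_norm_deriv_le_abs_pow 2 hW (by simp [hx0, hy0])
    (fun s hs => abs_wronskian_deriv_le (hM s hs) (hx s hs) (hyx s hs) (hN s hs)) t ht).trans_eq ?_
  push_cast
  ring

/-- For `x, y ∈ C²[−τ, τ]` with `x(0) = y(0) = ẋ(0) = ẏ(0) = 0`, one has
`|ẋ(t) y(t) − x(t) ẏ(t)| ≤ (1/3) ‖ẍ‖ ‖ẍ − ÿ‖ |t|³` for all `|t| ≤ τ`. -/
theorem key_estimate_wronskian
    (τ : ℝ) (hτ : 0 < τ)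
    (x y x' y' x'' y'' : ℝ → ℝ)
    (hx1 : ∀ t ∈ Set.Icc (-τ) τ, HasDerivWithinAt x (x' t) (Set.Icc (-τ) τ) t)
    (hx2 : ∀ t ∈ Set.Icc (-τ) τ, HasDerivWithinAt x' (x'' t) (Set.Icc (-τ) τ) t)
    (hy1 : ∀ t ∈ Set.Icc (-τ) τ, HasDerivWithinAt y (y' t) (Set.Icc (-τ) τ) t)
    (hy2 : ∀ t ∈ Set.Icc (-τ) τ, HasDerivWithinAt y' (y'' t) (Set.Icc (-τ) τ) t)
    (hcx : ContinuousOn x'' (Set.Icc (-τ) τ))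
    (hcy : ContinuousOn y'' (Set.Icc (-τ) τ))
    (hx0 : x 0 = 0) (hy0 : y 0 = 0) (hx'0 : x' 0 = 0) (hy'0 : y' 0 = 0) :
    ∀ t ∈ Set.Icc (-τ) τ,
      |x' t * y t - x t * y' t| ≤
        (1 / 3) * sSup ((fun s => |x'' s|) '' Set.Icc (-τ) τ) *
          sSup ((fun s => |x'' s - y'' s|) '' Set.Icc (-τ) τ) * |t| ^ 3 :=
  key_estimate_wronskian_general τ x y x' y' x'' y'' hx1 hx2 hy1 hy2 hcx hcy hx0 hy0 hx'0 hy'0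
end

section
/- Let −1/2 < λ < 0, t₀ > 0, and let α, β, σ, α̃, β̃, σ̃ ∈ C¹([−t₀, t₀], ℝ) with t₀ < min{ (1 − 2|λ|)/(½‖α‖ + ‖β‖), (1 − 2|λ|)/(½‖α̃‖ + ‖β̃‖) }. Let y and ỹ be the C² solutions on [−t₀, t₀] of ÿ = 4λ(tẏ − y)/t² + α(t)y/t + β(t)ẏ + σ(t) and of the analogous equation with coefficients (α̃, β̃, σ̃), respectively, both with y(0) = ỹ(0) = 0 and ẏ(0) = ẏ̃(0) = ẏ₀. Then ‖ÿ − ÿ̃‖ ≤ ( (‖α − α̃‖ + ‖β − β̃‖) ‖ẏ̃‖ + ‖σ − σ̃‖ ) / ( 1 − 2|λ| − (½‖α‖ + ‖β‖) t₀ ). -/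
/-! Write `w = y - z` and `W = ‖ẅ‖`. Since `w(0) = ẇ(0) = 0`, we get `|ẇ(t)| ≤ W|t|` and
`|w(t)| ≤ Wt²/2`, and also `|tẇ - w| ≤ Wt²/2` because `(tẇ - w)' = tẅ`. Hence the singular term
`4λ(tẇ - w)/t²` of the difference of the two equations is at most `2|λ|W`, and the other terms
are at most `(½‖α‖ + ‖β‖)t₀W + (‖α - α̃‖ + ‖β - β̃‖)‖ẏ̃‖ + ‖σ - σ̃‖`. This bounds `|ẅ(t)|` for `t ≠ 0`, and
by continuity also at `t = 0`. Because `t₀` is small, the multiple of `W` on the right can be moved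
to the left. -/

/-- Sup-norm `sup_{|t| ≤ t₀} |ξ(t)|` of a function on the interval `[−t₀, t₀]`. -/
noncomputable def supAbsOn (t₀ : ℝ) (ξ : ℝ → ℝ) : ℝ :=
  sSup ((fun t => |ξ t|) '' Set.Icc (-t₀) t₀)

/-- `y` (with derivative `y'` and second derivative `y''`, `y ∈ C²[−t₀, t₀]`) solves the
singular variational equation `ÿ = 4λ(tẏ − y)/t² + α(t)y/t + β(t)ẏ + σ(t)` (the equation
being required at `t ≠ 0`) with `y(0) = 0`, `ẏ(0) = ẏ₀`. -/
def IsVarSol (lam t₀ : ℝ) (a b s : ℝ → ℝ) (y0' : ℝ) (y y' y'' : ℝ → ℝ) : Prop :=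
  ContinuousOn y'' (Set.Icc (-t₀) t₀) ∧
  (∀ t ∈ Set.Icc (-t₀) t₀, HasDerivWithinAt y (y' t) (Set.Icc (-t₀) t₀) t) ∧
  (∀ t ∈ Set.Icc (-t₀) t₀, HasDerivWithinAt y' (y'' t) (Set.Icc (-t₀) t₀) t) ∧
  y 0 = 0 ∧ y' 0 = y0' ∧
  (∀ t ∈ Set.Icc (-t₀) t₀, t ≠ 0 →
    y'' t = 4 * lam * (t * y' t - y t) / t ^ 2 + a t * y t / t + b t * y' t + s t)

open Set

lemma abs_le_supAbsOn {t₀ : ℝ} {f : ℝ → ℝ} (hf : ContinuousOn f (Icc (-t₀) t₀)) {t : ℝ}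
    (ht : t ∈ Icc (-t₀) t₀) : |f t| ≤ supAbsOn t₀ f :=
  le_csSup (isCompact_Icc.image_of_continuousOn hf.abs).bddAbove ⟨t, ht, rfl⟩

lemma supAbsOn_le {t₀ M : ℝ} (ht₀ : 0 ≤ t₀) {f : ℝ → ℝ} (h : ∀ t ∈ Icc (-t₀) t₀, |f t| ≤ M) :
    supAbsOn t₀ f ≤ M :=
  csSup_le ((nonempty_Icc.2 (by linarith)).image _) (by rintro _ ⟨t, ht, rfl⟩; exact h t ht)

lemma supAbsOn_nonneg {t₀ : ℝ} (ht₀ : 0 ≤ t₀) {f : ℝ → ℝ} (hf : ContinuousOn f (Icc (-t₀) t₀)) :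
    0 ≤ supAbsOn t₀ f :=
  (abs_nonneg _).trans (abs_le_supAbsOn hf ⟨by linarith, ht₀⟩)

lemma supAbsOn_le_of_forall_ne_zero {t₀ M : ℝ} (ht₀ : 0 < t₀) {f : ℝ → ℝ}
    (hf : ContinuousOn f (Icc (-t₀) t₀)) (h : ∀ t ∈ Icc (-t₀) t₀, t ≠ 0 → |f t| ≤ M) :
    supAbsOn t₀ f ≤ M := by
  refine supAbsOn_le ht₀.le fun t ht => ?_
  rcases ne_or_eq t 0 with hne | rfl
  · exact h t ht hne
  have hsub : Ioc 0 t₀ ⊆ Icc (-t₀) t₀ :=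
    Ioc_subset_Icc_self.trans (Icc_subset_Icc_left (by linarith))
  have h0 : (0 : ℝ) ∈ closure (Ioc 0 t₀) := by
    rw [closure_Ioc ht₀.ne]
    exact left_mem_Icc.2 ht₀.le
  exact ContinuousWithinAt.closure_le h0 ((hf.abs 0 ht).mono hsub) continuousWithinAt_const
    fun x hx => h x (hsub hx) hx.1.ne'

lemma abs_le_mul_abs_of_abs_deriv_le_s11 {s : Set ℝ} {g g' : ℝ → ℝ} {C t : ℝ} (hs : Convex ℝ s)
    (h0 : 0 ∈ s) (ht : t ∈ s) (hg : ∀ x ∈ s, HasDerivWithinAt g (g' x) s x) (hg0 : g 0 = 0)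
    (hC : ∀ x ∈ s, |g' x| ≤ C) : |g t| ≤ C * |t| := by
  simpa [hg0] using hs.norm_image_sub_le_of_norm_hasDerivWithin_le hg hC h0 ht

lemma abs_le_mul_sq_div_two_of_abs_deriv_le_mul_self {g g' : ℝ → ℝ} {C T : ℝ} (hT : 0 ≤ T)
    (hg : ∀ x ∈ Icc 0 T, HasDerivWithinAt g (g' x) (Icc 0 T) x) (hg0 : g 0 = 0)
    (hC : ∀ x ∈ Icc 0 T, |g' x| ≤ C * x) : |g T| ≤ C * T ^ 2 / 2 := by
  have hB : ∀ x, HasDerivAt (fun x => C * x ^ 2 / 2) (C * x) x := fun x =>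
    (((hasDerivAt_pow 2 x).const_mul C).div_const 2).congr_deriv (by ring)
  refine image_norm_le_of_norm_deriv_right_le_deriv_boundary
    (fun x hx => (hg x hx).continuousWithinAt)
    (fun x hx => (hg x (Ico_subset_Icc_self hx)).mono_of_mem_nhdsWithin (Icc_mem_nhdsGE_of_mem hx))
    (by simp [hg0]) hB (fun x hx => hC x (Ico_subset_Icc_self hx)) (right_mem_Icc.2 hT)

lemma abs_le_mul_sq_div_two_of_abs_deriv_le {s : Set ℝ} {g g' : ℝ → ℝ} {C t : ℝ}
    (hs : s.OrdConnected) (h0 : 0 ∈ s) (ht : t ∈ s)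
    (hg : ∀ x ∈ s, HasDerivWithinAt g (g' x) s x) (hg0 : g 0 = 0)
    (hC : ∀ x ∈ s, |g' x| ≤ C * |x|) : |g t| ≤ C * t ^ 2 / 2 := by
  rcases le_total 0 t with h | h
  · have hsub : Icc 0 t ⊆ s := hs.out h0 ht
    exact abs_le_mul_sq_div_two_of_abs_deriv_le_mul_self h (fun x hx => (hg x (hsub hx)).mono hsub)
      hg0 fun x hx => by simpa [abs_of_nonneg hx.1] using hC x (hsub hx)
  · have hsub : Icc t 0 ⊆ s := hs.out ht h0
    have hneg : MapsTo Neg.neg (Icc 0 (-t)) (Icc t 0) := fun x hx =>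
      ⟨by linarith [hx.2], by linarith [hx.1]⟩
    have hg_neg : ∀ x ∈ Icc 0 (-t), HasDerivWithinAt (fun x => g (-x)) (-g' (-x)) (Icc 0 (-t)) x :=
      fun x hx =>
        (((hg _ (hsub (hneg hx))).mono hsub).comp x (hasDerivWithinAt_neg x _) hneg).congr_deriv
          (by ring)
    simpa using abs_le_mul_sq_div_two_of_abs_deriv_le_mul_self (neg_nonneg.2 h) hg_neg
      (by simpa using hg0) fun x hx => by simpa [abs_of_nonneg hx.1] using hC (-x) (hsub (hneg hx))

lemma abs_le_mul_sq_div_two_of_abs_second_deriv_le {s : Set ℝ} {w w' w'' : ℝ → ℝ} {W t : ℝ}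
    (hs : s.OrdConnected) (h0 : 0 ∈ s) (ht : t ∈ s)
    (hw : ∀ x ∈ s, HasDerivWithinAt w (w' x) s x) (hw' : ∀ x ∈ s, HasDerivWithinAt w' (w'' x) s x)
    (hw0 : w 0 = 0) (hw'0 : w' 0 = 0) (hW : ∀ x ∈ s, |w'' x| ≤ W) : |w t| ≤ W * t ^ 2 / 2 :=
  abs_le_mul_sq_div_two_of_abs_deriv_le hs h0 ht hw hw0 fun _ hx =>
    abs_le_mul_abs_of_abs_deriv_le_s11 hs.convex h0 hx hw' hw'0 hW

lemma abs_mul_deriv_sub_le_of_abs_second_deriv_le {s : Set ℝ} {w w' w'' : ℝ → ℝ} {W t : ℝ}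
    (hs : s.OrdConnected) (h0 : 0 ∈ s) (ht : t ∈ s)
    (hw : ∀ x ∈ s, HasDerivWithinAt w (w' x) s x) (hw' : ∀ x ∈ s, HasDerivWithinAt w' (w'' x) s x)
    (hw0 : w 0 = 0) (hW : ∀ x ∈ s, |w'' x| ≤ W) : |t * w' t - w t| ≤ W * t ^ 2 / 2 := by
  -- `x ↦ x w'(x) - w(x)` vanishes at `0` and has derivative `x w''(x)`
  refine abs_le_mul_sq_div_two_of_abs_deriv_le (g' := fun x => x * w'' x) hs h0 ht
    (fun x hx => (((hasDerivWithinAt_id x s).mul (hw' x hx)).sub (hw x hx)).congr_deriv ?_)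
    (by simp [hw0]) fun x hx => ?_
  · simp only [id_eq]
    ring
  · rw [abs_mul, mul_comm]
    exact mul_le_mul_of_nonneg_right (hW x hx) (abs_nonneg x)

lemma abs_mul_div_le_mul {α u t A U : ℝ} (ht : t ≠ 0) (hα : |α| ≤ A) (hu : |u| ≤ U * |t|) :
    |α * u / t| ≤ A * U := by
  rw [abs_div, abs_mul, div_le_iff₀ (abs_pos.2 ht), mul_assoc]
  exact mul_le_mul hα hu (abs_nonneg u) ((abs_nonneg α).trans hα)

lemma abs_four_mul_div_sq_le {lam g t W : ℝ} (ht : t ≠ 0) (hg : |g| ≤ W * t ^ 2 / 2) :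
    |4 * lam * g / t ^ 2| ≤ 2 * |lam| * W := by
  have ht2 : 0 < t ^ 2 := by positivity
  rw [abs_div, abs_of_pos ht2, div_le_iff₀ ht2, abs_mul, abs_mul, abs_of_pos four_pos]
  calc 4 * |lam| * |g| ≤ 4 * |lam| * (W * t ^ 2 / 2) := by gcongr
    _ = 2 * |lam| * W * t ^ 2 := by ring

section Comparison

variable {lam t₀ y0' : ℝ} {a b s a' b' s' y y' y'' z z' z'' : ℝ → ℝ}

theorem IsVarSol.second_deriv_sub_eq (hy : IsVarSol lam t₀ a b s y0' y y' y'')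
    (hz : IsVarSol lam t₀ a' b' s' y0' z z' z'') {t : ℝ} (ht : t ∈ Icc (-t₀) t₀) (hne : t ≠ 0) :
    y'' t - z'' t =
      4 * lam * (t * (y' t - z' t) - (y t - z t)) / t ^ 2 + a t * (y t - z t) / t +
        (a t - a' t) * z t / t + b t * (y' t - z' t) + (b t - b' t) * z' t + (s t - s' t) := by
  rw [hy.2.2.2.2.2 t ht hne, hz.2.2.2.2.2 t ht hne]
  ring

theorem IsVarSol.abs_sub_second_deriv_le (hy : IsVarSol lam t₀ a b s y0' y y' y'')
    (hz : IsVarSol lam t₀ a' b' s' y0' z z' z'') (ht₀ : 0 < t₀)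
    (ha : ContinuousOn a (Icc (-t₀) t₀)) (hb : ContinuousOn b (Icc (-t₀) t₀))
    (hda : ContinuousOn (fun t => a t - a' t) (Icc (-t₀) t₀))
    (hdb : ContinuousOn (fun t => b t - b' t) (Icc (-t₀) t₀))
    (hds : ContinuousOn (fun t => s t - s' t) (Icc (-t₀) t₀))
    {t : ℝ} (ht : t ∈ Icc (-t₀) t₀) (hne : t ≠ 0) :
    |y'' t - z'' t| ≤
      (2 * |lam| + (1 / 2 * supAbsOn t₀ a + supAbsOn t₀ b) * t₀) *
          supAbsOn t₀ (fun t => y'' t - z'' t) +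
        ((supAbsOn t₀ (fun t => a t - a' t) + supAbsOn t₀ (fun t => b t - b' t)) *
            supAbsOn t₀ z' + supAbsOn t₀ (fun t => s t - s' t)) := by
  rw [hy.second_deriv_sub_eq hz ht hne, abs_le]
  obtain ⟨hy''c, hyd, hy'd, hy0, hy'0, -⟩ := hy
  obtain ⟨hz''c, hzd, hz'd, hz0, hz'0, -⟩ := hz
  set W := supAbsOn t₀ (fun t => y'' t - z'' t)
  set Z := supAbsOn t₀ z'
  have h0 : (0 : ℝ) ∈ Icc (-t₀) t₀ := ⟨by linarith, ht₀.le⟩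
  have htt : |t| ≤ t₀ := abs_le.2 ht
  have hW0 : 0 ≤ W := supAbsOn_nonneg ht₀.le (hy''c.sub hz''c)
  have hwd : ∀ x ∈ Icc (-t₀) t₀,
      HasDerivWithinAt (fun t => y t - z t) (y' x - z' x) (Icc (-t₀) t₀) x :=
    fun x hx => (hyd x hx).sub (hzd x hx)
  have hw'd : ∀ x ∈ Icc (-t₀) t₀,
      HasDerivWithinAt (fun t => y' t - z' t) (y'' x - z'' x) (Icc (-t₀) t₀) x :=
    fun x hx => (hy'd x hx).sub (hz'd x hx)
  have hw'' : ∀ x ∈ Icc (-t₀) t₀, |y'' x - z'' x| ≤ W := fun x hx =>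
    abs_le_supAbsOn (hy''c.sub hz''c) hx
  have hw : |y t - z t| ≤ W * t₀ / 2 * |t| := by
    have := abs_le_mul_sq_div_two_of_abs_second_deriv_le ordConnected_Icc h0 ht hwd hw'd
      (by simp [hy0, hz0]) (by simp [hy'0, hz'0]) hw''
    rw [← sq_abs] at this
    nlinarith [mul_nonneg (mul_nonneg hW0 (abs_nonneg t)) (sub_nonneg.2 htt)]
  have hw' : |y' t - z' t| ≤ W * t₀ :=
    (abs_le_mul_abs_of_abs_deriv_le_s11 (convex_Icc _ _) h0 ht hw'd (by simp [hy'0, hz'0]) hw'').trans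
      (mul_le_mul_of_nonneg_left htt hW0)
  have hg := abs_mul_deriv_sub_le_of_abs_second_deriv_le ordConnected_Icc h0 ht hwd hw'd
    (by simp [hy0, hz0]) hw''
  have hz' : ∀ x ∈ Icc (-t₀) t₀, |z' x| ≤ Z :=
    fun _ hx => abs_le_supAbsOn (fun x hx => (hz'd x hx).continuousWithinAt) hx
  have hz : |z t| ≤ Z * |t| := abs_le_mul_abs_of_abs_deriv_le_s11 (convex_Icc _ _) h0 ht hzd hz0 hz'
  have h1 := abs_le.1 (abs_four_mul_div_sq_le (lam := lam) hne hg)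
  have h2 := abs_le.1 (abs_mul_div_le_mul hne (abs_le_supAbsOn ha ht) hw)
  have h3 := abs_le.1 (abs_mul_div_le_mul hne (abs_le_supAbsOn hda ht) hz)
  have h4 := abs_le.1 <| (abs_mul _ _).trans_le <|
    mul_le_mul (abs_le_supAbsOn hb ht) hw' (abs_nonneg _) (supAbsOn_nonneg ht₀.le hb)
  have h5 := abs_le.1 <| (abs_mul _ _).trans_le <|
    mul_le_mul (abs_le_supAbsOn hdb ht) (hz' t ht) (abs_nonneg _) (supAbsOn_nonneg ht₀.le hdb)
  have h6 := abs_le.1 (abs_le_supAbsOn hds ht)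
  constructor <;> linarith

end Comparison

theorem variational_eq_difference_estimate_general
    (lam t₀ : ℝ) (ht₀ : 0 < t₀)
    (a b s at' bt st : ℝ → ℝ)
    (ha : ContDiffOn ℝ 1 a (Set.Icc (-t₀) t₀))
    (hb : ContDiffOn ℝ 1 b (Set.Icc (-t₀) t₀))
    (hs : ContDiffOn ℝ 1 s (Set.Icc (-t₀) t₀))
    (hat : ContDiffOn ℝ 1 at' (Set.Icc (-t₀) t₀))
    (hbt : ContDiffOn ℝ 1 bt (Set.Icc (-t₀) t₀))
    (hst : ContDiffOn ℝ 1 st (Set.Icc (-t₀) t₀))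
    (hsmall : (1 / 2 * supAbsOn t₀ a + supAbsOn t₀ b) * t₀ < 1 - 2 * |lam|)
    (y0' : ℝ) (y y' y'' z z' z'' : ℝ → ℝ)
    (hy : IsVarSol lam t₀ a b s y0' y y' y'')
    (hz : IsVarSol lam t₀ at' bt st y0' z z' z'') :
    supAbsOn t₀ (fun t => y'' t - z'' t) ≤
      ((supAbsOn t₀ (fun t => a t - at' t) + supAbsOn t₀ (fun t => b t - bt t)) *
          supAbsOn t₀ z' +
        supAbsOn t₀ (fun t => s t - st t)) /
        (1 - 2 * |lam| - (1 / 2 * supAbsOn t₀ a + supAbsOn t₀ b) * t₀) := by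
  have hW := supAbsOn_le_of_forall_ne_zero (f := fun t => y'' t - z'' t) ht₀ (hy.1.sub hz.1)
    fun t ht hne => hy.abs_sub_second_deriv_le hz ht₀ ha.continuousOn hb.continuousOn
      (ha.continuousOn.sub hat.continuousOn) (hb.continuousOn.sub hbt.continuousOn)
      (hs.continuousOn.sub hst.continuousOn) ht hne
  rw [le_div_iff₀ (by linarith)]
  linarith

/-- (Comparison of solutions of two singular variational equations.)
For `−1/2 < λ < 0`, `C¹` coefficients `(α, β, σ)` and `(α̃, β̃, σ̃)` on `[−t₀, t₀]` with
`t₀ < min{(1 − 2|λ|)/(½‖α‖ + ‖β‖), (1 − 2|λ|)/(½‖α̃‖ + ‖β̃‖)}`, the solutions `y`, `ỹ` with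
`y(0) = ỹ(0) = 0`, `ẏ(0) = ẏ̃(0) = ẏ₀` satisfy
`‖ÿ − ÿ̃‖ ≤ ((‖α − α̃‖ + ‖β − β̃‖)‖ẏ̃‖ + ‖σ − σ̃‖)/(1 − 2|λ| − (½‖α‖ + ‖β‖)t₀)`. -/
theorem variational_eq_difference_estimate
    (lam t₀ : ℝ) (hlam1 : -(1 / 2) < lam) (hlam2 : lam < 0) (ht₀ : 0 < t₀)
    (a b s at' bt st : ℝ → ℝ)
    (ha : ContDiffOn ℝ 1 a (Set.Icc (-t₀) t₀))
    (hb : ContDiffOn ℝ 1 b (Set.Icc (-t₀) t₀))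
    (hs : ContDiffOn ℝ 1 s (Set.Icc (-t₀) t₀))
    (hat : ContDiffOn ℝ 1 at' (Set.Icc (-t₀) t₀))
    (hbt : ContDiffOn ℝ 1 bt (Set.Icc (-t₀) t₀))
    (hst : ContDiffOn ℝ 1 st (Set.Icc (-t₀) t₀))
    (hsmall : (1 / 2 * supAbsOn t₀ a + supAbsOn t₀ b) * t₀ < 1 - 2 * |lam|)
    (hsmall' : (1 / 2 * supAbsOn t₀ at' + supAbsOn t₀ bt) * t₀ < 1 - 2 * |lam|)
    (y0' : ℝ) (y y' y'' z z' z'' : ℝ → ℝ)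
    (hy : IsVarSol lam t₀ a b s y0' y y' y'')
    (hz : IsVarSol lam t₀ at' bt st y0' z z' z'') :
    supAbsOn t₀ (fun t => y'' t - z'' t) ≤
      ((supAbsOn t₀ (fun t => a t - at' t) + supAbsOn t₀ (fun t => b t - bt t)) *
          supAbsOn t₀ z' +
        supAbsOn t₀ (fun t => s t - st t)) /
        (1 - 2 * |lam| - (1 / 2 * supAbsOn t₀ a + supAbsOn t₀ b) * t₀) :=
  variational_eq_difference_estimate_general lam t₀ ht₀ a b s at' bt st ha hb hs hat hbt hst hsmall
    y0' y y' y'' z z' z'' hy hz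
end

section
/- Let f(p, v, w) = 2√(v² − p²) w²/(1 + v²)² − (pw − v)/(v(1 + v²)√(v² − p²)), let p₀ > 0, a > 0, δ > 0, and let v be a convex C² function on [p₀ − δ, p₀] with v(p₀) = p₀, v'(p₀) = 1 − a, and v(p) > p > 0 for p ∈ [p₀ − δ, p₀). Then there do not exist C¹ functions φ, ψ on [p₀ − δ, p₀] such that: φ'(p) = f_v(p, v(p), v'(p)) and ψ'(p) = f_{v'}(p, v(p), v'(p)) − φ(p) for p < p₀; ψ(p) ≤ 0 for all p; ψ(p) v''(p) = 0 for all p < p₀; ψ(p₀) = 0; and (−f(p, v(p), v'(p)) + φ(p)v'(p)) − φ(p) → 0 as p → p₀ − 0. -/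
/-! Along the curve the second term of `f` has numerator `v − p v' → p₀ − p₀(1 − a) = a p₀ > 0`
while its denominator `v (1 + v²) √(v² − p²)` tends to `0⁺`, so `f → +∞` as `p → p₀ − 0`,
whereas the first term tends to `0`. On the other hand `H − φ → 0` and the continuity of `φ`
and `v'` force `f = φ v' − φ − (H − φ)` to have the finite limit `φ(p₀)(1 − a) − φ(p₀)`. -/

/-- The integrand of the key problem of Newton's aerodynamic problem on the Maxwell
stratum: `f(p, v, w) = 2√(v² − p²)w²/(1 + v²)² − (pw − v)/(v(1 + v²)√(v² − p²))`. -/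
noncomputable def newtonF (p v w : ℝ) : ℝ :=
  2 * Real.sqrt (v ^ 2 - p ^ 2) * w ^ 2 / (1 + v ^ 2) ^ 2 -
    (p * w - v) / (v * (1 + v ^ 2) * Real.sqrt (v ^ 2 - p ^ 2))

open Filter Topology Set

section

variable {α : Type*} {l : Filter α} {P V W : α → ℝ} {p₀ w₀ : ℝ}

theorem tendsto_sqrt_sq_sub_sq_nhdsGT_zero (hP : Tendsto P l (𝓝 p₀))
    (hV : Tendsto V l (𝓝 p₀)) (hPV : ∀ᶠ x in l, P x ^ 2 < V x ^ 2) :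
    Tendsto (fun x => Real.sqrt (V x ^ 2 - P x ^ 2)) l (𝓝[>] 0) := by
  refine tendsto_nhdsWithin_of_tendsto_nhds_of_eventually_within _ ?_ ?_
  · simpa using ((hV.pow 2).sub (hP.pow 2)).sqrt
  · filter_upwards [hPV] with x hx
    exact Real.sqrt_pos.mpr (sub_pos.mpr hx)

theorem tendsto_newtonF_atTop (hp₀ : 0 < p₀) (hw₀ : w₀ < 1) (hP : Tendsto P l (𝓝 p₀))
    (hV : Tendsto V l (𝓝 p₀)) (hW : Tendsto W l (𝓝 w₀)) (hPV : ∀ᶠ x in l, P x ^ 2 < V x ^ 2) :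
    Tendsto (fun x => newtonF (P x) (V x) (W x)) l atTop := by
  have hS := tendsto_sqrt_sq_sub_sq_nhdsGT_zero hP hV hPV
  have hfirst : Tendsto (fun x => 2 * Real.sqrt (V x ^ 2 - P x ^ 2) * W x ^ 2 / (1 + V x ^ 2) ^ 2)
      l (𝓝 0) := by
    simpa [Pi.div_def] using ((tendsto_const_nhds.mul (tendsto_nhds_of_tendsto_nhdsWithin hS)).mul
      (hW.pow 2)).div ((tendsto_const_nhds.add (hV.pow 2)).pow 2) (by positivity)
  have hnum : Tendsto (fun x => V x - P x * W x) l (𝓝 (p₀ * (1 - w₀))) := by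
    convert hV.sub (hP.mul hW) using 2
    ring
  have hden : Tendsto (fun x => V x * (1 + V x ^ 2)) l (𝓝 (p₀ * (1 + p₀ ^ 2))) :=
    hV.mul (tendsto_const_nhds.add (hV.pow 2))
  have hsecond : Tendsto (fun x => (V x - P x * W x) / (V x * (1 + V x ^ 2)) *
      (Real.sqrt (V x ^ 2 - P x ^ 2))⁻¹) l atTop := by
    refine Tendsto.pos_mul_atTop ?_ (hnum.div hden (by positivity)) hS.inv_tendsto_nhdsGT_zero
    exact div_pos (mul_pos hp₀ (sub_pos.mpr hw₀)) (by positivity)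
  refine (hfirst.add_atTop hsecond).congr fun x => ?_
  simp only [newtonF, div_eq_mul_inv, mul_inv]
  ring

end

theorem no_PMP_multipliers_for_nonsingular_endpoint_general
    (p₀ a δ : ℝ) (hp₀ : 0 < p₀) (ha : 0 < a) (hδ : 0 < δ)
    (v v' v'' : ℝ → ℝ)
    (hd1 : ∀ p ∈ Set.Icc (p₀ - δ) p₀, HasDerivWithinAt v (v' p) (Set.Icc (p₀ - δ) p₀) p)
    (hd2 : ∀ p ∈ Set.Icc (p₀ - δ) p₀, HasDerivWithinAt v' (v'' p) (Set.Icc (p₀ - δ) p₀) p)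
    (hvp₀ : v p₀ = p₀) (hv'p₀ : v' p₀ = 1 - a)
    (hgt : ∀ p ∈ Set.Ico (p₀ - δ) p₀, p < v p ∧ 0 < p) :
    ¬ ∃ φ ψ : ℝ → ℝ,
      ContinuousOn φ (Set.Icc (p₀ - δ) p₀) ∧
      ContinuousOn ψ (Set.Icc (p₀ - δ) p₀) ∧
      (∀ p ∈ Set.Ico (p₀ - δ) p₀,
        HasDerivWithinAt φ (deriv (fun y => newtonF p y (v' p)) (v p))
          (Set.Icc (p₀ - δ) p₀) p ∧
        HasDerivWithinAt ψ (deriv (fun w => newtonF p (v p) w) (v' p) - φ p)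
          (Set.Icc (p₀ - δ) p₀) p) ∧
      (∀ p ∈ Set.Icc (p₀ - δ) p₀, ψ p ≤ 0) ∧
      (∀ p ∈ Set.Ico (p₀ - δ) p₀, ψ p * v'' p = 0) ∧
      ψ p₀ = 0 ∧
      Filter.Tendsto (fun p => (-(newtonF p (v p) (v' p)) + φ p * v' p) - φ p)
        (nhdsWithin p₀ (Set.Iio p₀)) (nhds 0) := by
  rintro ⟨φ, -, hφ, -, -, -, -, -, hlim⟩
  have hδp₀ : p₀ - δ < p₀ := by linarith
  have hp₀mem : p₀ ∈ Icc (p₀ - δ) p₀ := right_mem_Icc.mpr hδp₀.le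
  have hleft {g : ℝ → ℝ} (hg : ContinuousOn g (Icc (p₀ - δ) p₀)) :
      Tendsto g (𝓝[<] p₀) (𝓝 (g p₀)) :=
    ((hg p₀ hp₀mem).mono_of_mem_nhdsWithin (Icc_mem_nhdsLT hδp₀)).tendsto
  have hv := hleft fun p hp => (hd1 p hp).continuousWithinAt
  have hv' := hleft fun p hp => (hd2 p hp).continuousWithinAt
  rw [hvp₀] at hv
  rw [hv'p₀] at hv'
  have hF : Tendsto (fun p => newtonF p (v p) (v' p)) (𝓝[<] p₀) atTop := by
    refine tendsto_newtonF_atTop hp₀ (by linarith) (tendsto_id.mono_left nhdsWithin_le_nhds) hv hv' ?_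
    filter_upwards [Ioo_mem_nhdsLT hδp₀] with p hp
    obtain ⟨hpv, hpos⟩ := hgt p (Ioo_subset_Ico_self hp)
    exact pow_lt_pow_left₀ hpv hpos.le two_ne_zero
  have hF_finite : Tendsto (fun p => newtonF p (v p) (v' p)) (𝓝[<] p₀)
      (𝓝 (φ p₀ * (1 - a) - φ p₀ - 0)) :=
    (((hleft hφ).mul hv').sub (hleft hφ)).sub hlim |>.congr fun p => by ring
  exact not_tendsto_nhds_of_tendsto_atTop hF _ hF_finite

/-- (Nonsingular trajectories with `v'(p₀) = 1 − a`, `a > 0`, violate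
Pontryagin's Maximum Principle.) There are no adjoint variables `φ, ψ ∈ C¹[p₀ − δ, p₀]`
with `φ' = f_v`, `ψ' = f_{v'} − φ`, `ψ ≤ 0`, `ψ v'' = 0`, `ψ(p₀) = 0` and
`H − φ = (−f + φv') − φ → 0` as `p → p₀ − 0`, along a convex `C²` curve `v` with
`v(p₀) = p₀`, `v'(p₀) = 1 − a` and `v(p) > p > 0` on `[p₀ − δ, p₀)`. -/
theorem no_PMP_multipliers_for_nonsingular_endpoint
    (p₀ a δ : ℝ) (hp₀ : 0 < p₀) (ha : 0 < a) (hδ : 0 < δ)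
    (v v' v'' : ℝ → ℝ)
    (hc : ContinuousOn v'' (Set.Icc (p₀ - δ) p₀))
    (hd1 : ∀ p ∈ Set.Icc (p₀ - δ) p₀, HasDerivWithinAt v (v' p) (Set.Icc (p₀ - δ) p₀) p)
    (hd2 : ∀ p ∈ Set.Icc (p₀ - δ) p₀, HasDerivWithinAt v' (v'' p) (Set.Icc (p₀ - δ) p₀) p)
    (hconv : ConvexOn ℝ (Set.Icc (p₀ - δ) p₀) v)
    (hvp₀ : v p₀ = p₀) (hv'p₀ : v' p₀ = 1 - a)
    (hgt : ∀ p ∈ Set.Ico (p₀ - δ) p₀, p < v p ∧ 0 < p) :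
    ¬ ∃ φ ψ : ℝ → ℝ,
      ContinuousOn φ (Set.Icc (p₀ - δ) p₀) ∧
      ContinuousOn ψ (Set.Icc (p₀ - δ) p₀) ∧
      (∀ p ∈ Set.Ico (p₀ - δ) p₀,
        HasDerivWithinAt φ (deriv (fun y => newtonF p y (v' p)) (v p))
          (Set.Icc (p₀ - δ) p₀) p ∧
        HasDerivWithinAt ψ (deriv (fun w => newtonF p (v p) w) (v' p) - φ p)
          (Set.Icc (p₀ - δ) p₀) p) ∧
      (∀ p ∈ Set.Icc (p₀ - δ) p₀, ψ p ≤ 0) ∧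
      (∀ p ∈ Set.Ico (p₀ - δ) p₀, ψ p * v'' p = 0) ∧
      ψ p₀ = 0 ∧
      Filter.Tendsto (fun p => (-(newtonF p (v p) (v' p)) + φ p * v' p) - φ p)
        (nhdsWithin p₀ (Set.Iio p₀)) (nhds 0) :=
  no_PMP_multipliers_for_nonsingular_endpoint_general p₀ a δ hp₀ ha hδ v v' v'' hd1 hd2 hvp₀ hv'p₀
    hgt
end

section
/- Let f(p, v, w) = 2√(v² − p²) w²/(1 + v²)² − (pw − v)/(v(1 + v²)√(v² − p²)). Then for all real p, v, w with 0 < p < v: (i) ∂²f/∂w²(p, v, w) = 4√(v² − p²)/(1 + v²)² > 0, and (ii) ∂f/∂v(p, v, w) − ∂²f/∂p∂w(p, v, w) − w · ∂²f/∂v∂w(p, v, w) = ∂²f/∂w²(p, v, w) · ( −(w − 1)²/(4(v − p)) − (w + 1)²/(4(v + p)) + 2vw²/(1 + v²) ). -/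
/-!
Since `f` is quadratic in `w`, `f_ww = 4√(v² − p²)/(1 + v²)²` is immediate. The partial
derivatives `f_v`, `f_pw`, `f_vw` are computed in closed form by the chain rule; writing
`s = √(v² − p²)`, identity (ii) then becomes a rational identity in `p, v, w, s` that holds
modulo `s² = v² − p²`.
-/

open Real

lemma hasDerivAt_newtonF_w (p v w : ℝ) :
    HasDerivAt (newtonF p v ·)
      (4 * √(v ^ 2 - p ^ 2) * w / (1 + v ^ 2) ^ 2
        - p / (v * (1 + v ^ 2) * √(v ^ 2 - p ^ 2))) w := by
  have hquad := ((hasDerivAt_pow 2 w).const_mul (2 * √(v ^ 2 - p ^ 2))).div_const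
    ((1 + v ^ 2) ^ 2)
  have hlin := (((hasDerivAt_id w).const_mul p).sub_const v).div_const
    (v * (1 + v ^ 2) * √(v ^ 2 - p ^ 2))
  exact (hquad.sub hlin).congr_deriv (by norm_num; ring)

lemma deriv_newtonF_w (p v : ℝ) :
    deriv (newtonF p v ·) =
      fun w => 4 * √(v ^ 2 - p ^ 2) * w / (1 + v ^ 2) ^ 2
        - p / (v * (1 + v ^ 2) * √(v ^ 2 - p ^ 2)) :=
  funext fun w => (hasDerivAt_newtonF_w p v w).deriv

lemma iteratedDeriv_two_newtonF_w (p v w : ℝ) :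
    iteratedDeriv 2 (newtonF p v ·) w = 4 * √(v ^ 2 - p ^ 2) / (1 + v ^ 2) ^ 2 := by
  rw [iteratedDeriv_succ, iteratedDeriv_one, deriv_newtonF_w]
  exact ((((hasDerivAt_id w).const_mul (4 * √(v ^ 2 - p ^ 2))).div_const
    ((1 + v ^ 2) ^ 2)).sub_const (p / (v * (1 + v ^ 2) * √(v ^ 2 - p ^ 2)))).deriv.trans (by ring)

section SmoothRegion

variable {p v : ℝ}

lemma sqrt_sq_sub_sq_pos (h : p ^ 2 < v ^ 2) : 0 < √(v ^ 2 - p ^ 2) := sqrt_pos.2 (sub_pos.2 h)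

lemma sq_sqrt_sq_sub_sq (h : p ^ 2 < v ^ 2) : √(v ^ 2 - p ^ 2) ^ 2 = v ^ 2 - p ^ 2 :=
  sq_sqrt (sub_pos.2 h).le

lemma ne_zero_of_sq_lt_sq (h : p ^ 2 < v ^ 2) : v ≠ 0 := by
  rintro rfl
  nlinarith

lemma newtonF_denom_ne_zero (h : p ^ 2 < v ^ 2) : v * (1 + v ^ 2) * √(v ^ 2 - p ^ 2) ≠ 0 :=
  mul_ne_zero (mul_ne_zero (ne_zero_of_sq_lt_sq h) (by positivity)) (sqrt_sq_sub_sq_pos h).ne'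

lemma hasDerivAt_sqrt_sq_sub_const (h : p ^ 2 < v ^ 2) :
    HasDerivAt (fun y => √(y ^ 2 - p ^ 2)) (v / √(v ^ 2 - p ^ 2)) v :=
  (((hasDerivAt_pow 2 v).sub_const (p ^ 2)).sqrt (sub_pos.2 h).ne').congr_deriv
    (by field_simp; norm_num)

lemma hasDerivAt_sqrt_const_sub_sq (h : p ^ 2 < v ^ 2) :
    HasDerivAt (fun q => √(v ^ 2 - q ^ 2)) (-p / √(v ^ 2 - p ^ 2)) p :=
  (((hasDerivAt_pow 2 p).const_sub (v ^ 2)).sqrt (sub_pos.2 h).ne').congr_deriv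
    (by field_simp; norm_num)

lemma hasDerivAt_newtonF_v (h : p ^ 2 < v ^ 2) (w : ℝ) :
    HasDerivAt (fun y => newtonF p y w)
      (2 * v * w ^ 2 / (√(v ^ 2 - p ^ 2) * (1 + v ^ 2) ^ 2)
        - 8 * v * √(v ^ 2 - p ^ 2) * w ^ 2 / (1 + v ^ 2) ^ 3
        + (1 + (p * w - v) * (1 / v + 2 * v / (1 + v ^ 2) + v / (v ^ 2 - p ^ 2)))
          / (v * (1 + v ^ 2) * √(v ^ 2 - p ^ 2))) v := by
  have hs := hasDerivAt_sqrt_sq_sub_const h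
  have hD : HasDerivAt (fun y => 1 + y ^ 2) (2 * v) v := by
    simpa using (hasDerivAt_pow 2 v).const_add 1
  have hquad := ((hs.const_mul 2).mul_const (w ^ 2)).div (hD.pow 2)
    (by simp only [Pi.pow_apply]; positivity)
  have hlin := ((hasDerivAt_id v).const_sub (p * w)).div (((hasDerivAt_id v).mul hD).mul hs)
    (newtonF_denom_ne_zero h)
  have hv := ne_zero_of_sq_lt_sq h
  have hs0 := sqrt_sq_sub_sq_pos h
  have hs2 := sq_sqrt_sq_sub_sq h
  refine (hquad.sub hlin).congr_deriv ?_
  simp only [Pi.mul_apply, Pi.pow_apply, id]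
  set s := √(v ^ 2 - p ^ 2)
  rw [← hs2]
  field_simp
  ring

lemma hasDerivAt_deriv_newtonF_w_p (h : p ^ 2 < v ^ 2) (w : ℝ) :
    HasDerivAt (fun q => deriv (newtonF q v ·) w)
      (-4 * p * w / (√(v ^ 2 - p ^ 2) * (1 + v ^ 2) ^ 2)
        - v / ((1 + v ^ 2) * √(v ^ 2 - p ^ 2) * (v ^ 2 - p ^ 2))) p := by
  simp only [deriv_newtonF_w]
  have hs := hasDerivAt_sqrt_const_sub_sq h
  have hlin := ((hs.const_mul 4).mul_const w).div_const ((1 + v ^ 2) ^ 2)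
  have hrec := (hasDerivAt_id p).div (hs.const_mul (v * (1 + v ^ 2))) (newtonF_denom_ne_zero h)
  have hv := ne_zero_of_sq_lt_sq h
  have hs0 := sqrt_sq_sub_sq_pos h
  have hs2 := sq_sqrt_sq_sub_sq h
  refine (hlin.sub hrec).congr_deriv ?_
  simp only [id]
  set s := √(v ^ 2 - p ^ 2)
  rw [← hs2]
  field_simp
  linear_combination (-(1 + v ^ 2)) * hs2

lemma hasDerivAt_deriv_newtonF_w_v (h : p ^ 2 < v ^ 2) (w : ℝ) :
    HasDerivAt (fun y => deriv (newtonF p y ·) w)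
      (4 * v * w / (√(v ^ 2 - p ^ 2) * (1 + v ^ 2) ^ 2)
        - 16 * v * √(v ^ 2 - p ^ 2) * w / (1 + v ^ 2) ^ 3
        + p * (1 / v + 2 * v / (1 + v ^ 2) + v / (v ^ 2 - p ^ 2))
          / (v * (1 + v ^ 2) * √(v ^ 2 - p ^ 2))) v := by
  simp only [deriv_newtonF_w]
  have hs := hasDerivAt_sqrt_sq_sub_const h
  have hD : HasDerivAt (fun y => 1 + y ^ 2) (2 * v) v := by
    simpa using (hasDerivAt_pow 2 v).const_add 1
  have hlin := ((hs.const_mul 4).mul_const w).div (hD.pow 2)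
    (by simp only [Pi.pow_apply]; positivity)
  have hrec := (hasDerivAt_const v p).div (((hasDerivAt_id v).mul hD).mul hs)
    (newtonF_denom_ne_zero h)
  have hv := ne_zero_of_sq_lt_sq h
  have hs0 := sqrt_sq_sub_sq_pos h
  have hs2 := sq_sqrt_sq_sub_sq h
  refine (hlin.sub hrec).congr_deriv ?_
  simp only [Pi.mul_apply, Pi.pow_apply, id]
  set s := √(v ^ 2 - p ^ 2)
  rw [← hs2]
  field_simp
  ring

end SmoothRegion

/-- For `0 < p < v`: (i) `f_ww = 4√(v² − p²)/(1 + v²)² > 0`, and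
(ii) `f_v − f_{pw} − w f_{vw} = f_ww · (−(w−1)²/(4(v−p)) − (w+1)²/(4(v+p)) + 2vw²/(1+v²))`,
the identity from which the Euler–Lagrange equation for singular extremals follows. -/
theorem newtonF_strong_legendre_and_EL_identity :
    ∀ p v w : ℝ, 0 < p → p < v →
      (iteratedDeriv 2 (fun w' => newtonF p v w') w =
          4 * Real.sqrt (v ^ 2 - p ^ 2) / (1 + v ^ 2) ^ 2 ∧
        0 < iteratedDeriv 2 (fun w' => newtonF p v w') w) ∧
      (deriv (fun y => newtonF p y w) v -
          deriv (fun q => deriv (fun w' => newtonF q v w') w) p -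
          w * deriv (fun y => deriv (fun w' => newtonF p y w') w) v =
        iteratedDeriv 2 (fun w' => newtonF p v w') w *
          (-(w - 1) ^ 2 / (4 * (v - p)) - (w + 1) ^ 2 / (4 * (v + p)) +
            2 * v * w ^ 2 / (1 + v ^ 2))) := by
  intro p v w hp hpv
  have h : p ^ 2 < v ^ 2 := by nlinarith
  have hs0 := sqrt_sq_sub_sq_pos h
  rw [iteratedDeriv_two_newtonF_w]
  refine ⟨⟨rfl, by positivity⟩, ?_⟩
  rw [(hasDerivAt_newtonF_v h w).deriv, (hasDerivAt_deriv_newtonF_w_p h w).deriv,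
    (hasDerivAt_deriv_newtonF_w_v h w).deriv]
  have hv := ne_zero_of_sq_lt_sq h
  have hvp : v - p ≠ 0 := sub_ne_zero.2 hpv.ne'
  have hvp' : v + p ≠ 0 := (add_pos (hp.trans hpv) hp).ne'
  have hs2 := sq_sqrt_sq_sub_sq h
  set s := √(v ^ 2 - p ^ 2)
  rw [← hs2]
  field_simp
  -- after clearing denominators the two sides differ by a multiple of `s² − (v² − p²)`
  linear_combination 2 * v ^ 2 * (1 + v ^ 2) * (v * w ^ 2 + v - 2 * p * w) * s ^ 2 * hs2
end

section
/- Let p₀ > 0 with p₀ ≠ 1/√3, let δ > 0, and let v be a real-analytic (or C³) function on [p₀ − δ, p₀] with v(p₀) = p₀, v'(p₀) = 1, v(p) > p for p ∈ [p₀ − δ, p₀), satisfying the Euler–Lagrange equation v''(p) = −¼(v'(p) − 1)²/(v(p) − p) − ¼(v'(p) + 1)²/(v(p) + p) + 2v(p)v'(p)²/(1 + v(p)²) for all p ∈ [p₀ − δ, p₀). Then v''(p₀) = (3p₀² − 1)/(3p₀(1 + p₀²)) and v'''(p₀) = (3p₀⁴ + 2p₀² + 1)/(2p₀²(1 + p₀²)²).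 -/
/-!
Write `w = v - p`, so that `w ≥ 0` has a double zero at `p₀` and the singular term of the
Euler–Lagrange equation is `A = w'² / w`. If `c = w''(p₀) ≠ 0`, L'Hôpital's rule gives
`w' ~ c (p - p₀)` and `w ~ c (p - p₀)² / 2`, hence `A → 2c`; if `c = 0`, the Glaeser inequality
`w'² ≤ 4 (sup |w''|) w` gives `A → 0 = 2c` as well. Letting `p → p₀` in the equation gives a linear
equation for `c`. The hypothesis `p₀ ≠ 1/√3` says exactly that `c ≠ 0`; then expanding `w` to third
order gives `(A - 2c) / (p - p₀) → 4 v'''(p₀) / 3`, and the difference quotient of the equation at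
`p₀` gives a linear equation for `v'''(p₀)`.
-/

open Filter Set Topology

theorem HasDerivWithinAt.tendsto_nhdsLT {f : ℝ → ℝ} {f' a : ℝ} {s : Set ℝ}
    (hf : HasDerivWithinAt f f' s a) (hs : s ∈ 𝓝[<] a) :
    Tendsto f (𝓝[<] a) (𝓝 (f a)) :=
  (hf.continuousWithinAt.mono_of_mem_nhdsWithin hs).tendsto

theorem HasDerivWithinAt.tendsto_slope_nhdsLT {f : ℝ → ℝ} {f' a : ℝ} {s : Set ℝ}
    (hf : HasDerivWithinAt f f' s a) (hs : s ∈ 𝓝[<] a) :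
    Tendsto (fun x => (f x - f a) / (x - a)) (𝓝[<] a) (𝓝 f') := by
  have h := (hasDerivWithinAt_iff_tendsto_slope' (s := Iio a) (lt_irrefl a)).1
    (hf.mono_of_mem_nhdsWithin hs)
  exact h.congr fun x => slope_def_field f a x

theorem eventually_hasDerivAt_of_forall_Icc {f f' : ℝ → ℝ} {a b : ℝ} (hab : a < b)
    (hf : ∀ x ∈ Icc a b, HasDerivWithinAt f (f' x) (Icc a b) x) :
    ∀ᶠ x in 𝓝[<] b, HasDerivAt f (f' x) x := by
  filter_upwards [Ioo_mem_nhdsLT hab] with x hx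
  exact (hf x (Ioo_subset_Icc_self hx)).hasDerivAt (Icc_mem_nhds hx.1 hx.2)

theorem tendsto_div_pow_succ_nhdsLT {f f' : ℝ → ℝ} {a L : ℝ} {n : ℕ}
    (hf : ∀ᶠ x in 𝓝[<] a, HasDerivAt f (f' x) x) (hf0 : Tendsto f (𝓝[<] a) (𝓝 0))
    (hf' : Tendsto (fun x => f' x / (x - a) ^ n) (𝓝[<] a) (𝓝 L)) :
    Tendsto (fun x => f x / (x - a) ^ (n + 1)) (𝓝[<] a) (𝓝 (L / (n + 1))) := by
  refine HasDerivAt.lhopital_zero_nhdsLT hf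
    (g' := fun x => (n + 1) * (x - a) ^ n) (Eventually.of_forall fun x => ?_) ?_ hf0 ?_ ?_
  · simpa using ((hasDerivAt_id x).sub_const a).fun_pow (n + 1)
  · filter_upwards [self_mem_nhdsWithin] with x (hx : x < a)
    exact mul_ne_zero (by positivity) (pow_ne_zero _ (sub_ne_zero.2 hx.ne))
  · have h : Tendsto (fun x : ℝ => (x - a) ^ (n + 1)) (𝓝 a) (𝓝 ((a - a) ^ (n + 1))) :=
      ((continuous_id.sub continuous_const).pow _).tendsto a
    simpa using h.mono_left nhdsWithin_le_nhds
  · refine (hf'.div_const (n + 1)).congr fun x => ?_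
    rw [div_div, mul_comm]

/-- Glaeser's inequality: by the mean value theorem applied to `f - f' x • id` on the segment from
`x` to the test point `q = x - f' x / (2 M)`, `0 ≤ f q ≤ f x - f' x ² / (4 M)`. -/
theorem sq_deriv_le_of_nonneg {f f' f'' : ℝ → ℝ} {s : Set ℝ} {M x : ℝ} (hs : Convex ℝ s)
    (hM : 0 < M) (hf : ∀ y ∈ s, HasDerivWithinAt f (f' y) s y)
    (hf' : ∀ y ∈ s, HasDerivWithinAt f' (f'' y) s y) (hf'' : ∀ y ∈ s, |f'' y| ≤ M)
    (hf0 : ∀ y ∈ s, 0 ≤ f y) (hx : x ∈ s) (hq : x - f' x / (2 * M) ∈ s) :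
    f' x ^ 2 ≤ 4 * M * f x := by
  set q := x - f' x / (2 * M)
  have hseg : uIcc x q ⊆ s := hs.ordConnected.uIcc_subset hx hq
  have hlip : ∀ y ∈ uIcc x q, ‖f' y - f' x‖ ≤ M * |q - x| := by
    intro y hy
    have h := hs.norm_image_sub_le_of_norm_hasDerivWithin_le hf' (fun z hz => hf'' z hz) hx
      (hseg hy)
    exact h.trans (mul_le_mul_of_nonneg_left (abs_sub_le_of_uIcc_subset_uIcc
      (uIcc_subset_uIcc_left hy)) hM.le)
  have hmvt := (convex_uIcc x q).norm_image_sub_le_of_norm_hasDerivWithin_le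
    (f := fun y => f y - f' x * y) (fun y hy => ((hf y (hseg hy)).mono hseg).sub
      ((hasDerivWithinAt_id y _).const_mul (f' x)) |>.congr_deriv (by ring)) hlip
    left_mem_uIcc right_mem_uIcc
  have hqx : q - x = -(f' x / (2 * M)) := by ring
  simp only [Real.norm_eq_abs, hqx, abs_neg, abs_div, abs_of_pos (by positivity : 0 < 2 * M)]
    at hmvt
  have hdrop : f q ≤ f x - f' x ^ 2 / (4 * M) := by
    have e1 : f' x * q - f' x * x = -(f' x ^ 2 / (2 * M)) := by rw [← mul_sub, hqx]; ring
    have e2 : M * (|f' x| / (2 * M)) * (|f' x| / (2 * M)) = f' x ^ 2 / (4 * M) := by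
      field_simp; rw [sq_abs]; ring
    have e3 : f' x ^ 2 / (2 * M) = 2 * (f' x ^ 2 / (4 * M)) := by field_simp; ring
    linarith [(le_abs_self _).trans hmvt]
  have h : f' x ^ 2 / (4 * M) ≤ f x := by linarith [hf0 q hq]
  rwa [div_le_iff₀ (by positivity), mul_comm] at h

theorem tendsto_sq_deriv_div_nhdsLT_of_ne_zero {w w' w'' : ℝ → ℝ} {a c : ℝ} (hc : c ≠ 0)
    (hw : ∀ᶠ x in 𝓝[<] a, HasDerivAt w (w' x) x)
    (hw' : ∀ᶠ x in 𝓝[<] a, HasDerivAt w' (w'' x) x)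
    (hw0 : Tendsto w (𝓝[<] a) (𝓝 0)) (hw'0 : Tendsto w' (𝓝[<] a) (𝓝 0))
    (hw'' : Tendsto w'' (𝓝[<] a) (𝓝 c)) :
    Tendsto (fun x => w' x ^ 2 / w x) (𝓝[<] a) (𝓝 (2 * c)) := by
  have h1 := tendsto_div_pow_succ_nhdsLT (n := 0) hw' hw'0 (by simpa using hw'')
  have h2 := tendsto_div_pow_succ_nhdsLT (n := 1) hw hw0 (by simpa using h1)
  norm_num at h1 h2
  have h := (h1.pow 2).div h2 (by simpa using hc)
  rw [show c ^ 2 / (c / 2) = 2 * c by field_simp] at h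
  refine h.congr' ?_
  filter_upwards [self_mem_nhdsWithin] with x (hx : x < a)
  simp only [Pi.div_apply, div_pow]
  exact div_div_div_cancel_right₀ (pow_ne_zero 2 (sub_ne_zero.2 hx.ne)) _ _

theorem tendsto_sq_deriv_div_nhdsLT_of_eq_zero {w w' w'' : ℝ → ℝ} {a : ℝ}
    (hw : ∀ᶠ x in 𝓝[<] a, HasDerivAt w (w' x) x)
    (hw' : ∀ᶠ x in 𝓝[<] a, HasDerivAt w' (w'' x) x) (hw'0 : Tendsto w' (𝓝[<] a) (𝓝 0))
    (hw'' : Tendsto w'' (𝓝[<] a) (𝓝 0)) (hw_nonneg : ∀ᶠ x in 𝓝[<] a, 0 ≤ w x) :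
    Tendsto (fun x => w' x ^ 2 / w x) (𝓝[<] a) (𝓝 0) := by
  have h1 := tendsto_div_pow_succ_nhdsLT (n := 0) hw' hw'0 (by simpa using hw'')
  norm_num at h1
  rw [Metric.tendsto_nhds]
  intro ε hε
  have hM : 0 < ε / 8 := by positivity
  obtain ⟨b, hb : b < a, hbs⟩ := mem_nhdsLT_iff_exists_Ioo_subset.1 (hw.and (hw'.and
    ((hw''.eventually (Metric.closedBall_mem_nhds 0 hM)).and hw_nonneg)))
  -- for `x > (a + 2b)/3` the test point, within `(a - x)/2` of `x`, stays in `Ioo b a`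
  filter_upwards [Ioo_mem_nhdsLT (show (a + 2 * b) / 3 < a by linarith),
    h1.eventually (Metric.closedBall_mem_nhds 0 hM)] with x hx hx'
  rw [Real.dist_eq, sub_zero, abs_div, abs_of_neg (sub_neg.2 hx.2),
    div_le_iff₀ (by linarith [hx.2])] at hx'
  have hxs : x ∈ Ioo b a := ⟨by linarith [hx.1], hx.2⟩
  have hq : x - w' x / (2 * (ε / 8)) ∈ Ioo b a := by
    have hbound : |w' x / (2 * (ε / 8))| ≤ (a - x) / 2 := by
      rw [abs_div, abs_of_pos (by positivity : (0 : ℝ) < 2 * (ε / 8)),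
        div_le_iff₀ (by positivity)]
      linarith
    have := abs_le.1 hbound
    constructor <;> linarith [hx.1, hx.2]
  have hglaeser := sq_deriv_le_of_nonneg (convex_Ioo b a) hM
    (fun y hy => (hbs hy).1.hasDerivWithinAt) (fun y hy => (hbs hy).2.1.hasDerivWithinAt)
    (fun y hy => by simpa using (hbs hy).2.2.1) (fun y hy => (hbs hy).2.2.2) hxs hq
  have hwx : 0 ≤ w x := (hbs hxs).2.2.2
  rw [Real.dist_eq, sub_zero, abs_of_nonneg (by positivity)]
  calc w' x ^ 2 / w x ≤ 4 * (ε / 8) := div_le_of_le_mul₀ hwx (by positivity) hglaeser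
    _ < ε := by linarith

theorem tendsto_sq_deriv_div_nhdsLT {w w' w'' : ℝ → ℝ} {a c : ℝ}
    (hw : ∀ᶠ x in 𝓝[<] a, HasDerivAt w (w' x) x)
    (hw' : ∀ᶠ x in 𝓝[<] a, HasDerivAt w' (w'' x) x)
    (hw0 : Tendsto w (𝓝[<] a) (𝓝 0)) (hw'0 : Tendsto w' (𝓝[<] a) (𝓝 0))
    (hw'' : Tendsto w'' (𝓝[<] a) (𝓝 c)) (hw_nonneg : ∀ᶠ x in 𝓝[<] a, 0 ≤ w x) :
    Tendsto (fun x => w' x ^ 2 / w x) (𝓝[<] a) (𝓝 (2 * c)) := by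
  rcases eq_or_ne c 0 with rfl | hc
  · simpa using tendsto_sq_deriv_div_nhdsLT_of_eq_zero hw hw' hw'0 hw'' hw_nonneg
  · exact tendsto_sq_deriv_div_nhdsLT_of_ne_zero hc hw hw' hw0 hw'0 hw''

theorem tendsto_slope_sq_deriv_div_nhdsLT {w w' w'' : ℝ → ℝ} {a c d : ℝ} (hc : c ≠ 0)
    (hw : ∀ᶠ x in 𝓝[<] a, HasDerivAt w (w' x) x)
    (hw' : ∀ᶠ x in 𝓝[<] a, HasDerivAt w' (w'' x) x)
    (hw0 : Tendsto w (𝓝[<] a) (𝓝 0)) (hw'0 : Tendsto w' (𝓝[<] a) (𝓝 0))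
    (hw'' : Tendsto (fun x => (w'' x - c) / (x - a)) (𝓝[<] a) (𝓝 d)) :
    Tendsto (fun x => (w' x ^ 2 / w x - 2 * c) / (x - a)) (𝓝[<] a) (𝓝 (4 * d / 3)) := by
  have hsub : Tendsto (fun x => x - a) (𝓝[<] a) (𝓝 0) := by
    simpa using ((continuous_sub_right a).tendsto a).mono_left nhdsWithin_le_nhds
  have hne : ∀ᶠ x in 𝓝[<] a, x - a ≠ 0 := by
    filter_upwards [self_mem_nhdsWithin] with x (hx : x < a)
    exact sub_ne_zero.2 hx.ne
  have hw''c : Tendsto w'' (𝓝[<] a) (𝓝 c) := by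
    have h := (hsub.mul hw'').const_add c
    rw [zero_mul, add_zero] at h
    refine h.congr' ?_
    filter_upwards [hne] with x hx
    field_simp
    ring
  have h1 := tendsto_div_pow_succ_nhdsLT (n := 0) hw' hw'0 (by simpa using hw''c)
  have h2 := tendsto_div_pow_succ_nhdsLT (n := 1) hw hw0 (by simpa using h1)
  have r2 := tendsto_div_pow_succ_nhdsLT (n := 1) (f := fun x => w' x - c * (x - a))
    (f' := fun x => w'' x - c)
    (by
      filter_upwards [hw'] with x hx
      exact (hx.sub (((hasDerivAt_id x).sub_const a).const_mul c)).congr_deriv (by simp))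
    (by simpa using hw'0.sub (hsub.const_mul c)) (by simpa using hw'')
  have r3 := tendsto_div_pow_succ_nhdsLT (n := 2) (f := fun x => w x - c / 2 * (x - a) ^ 2)
    (f' := fun x => w' x - c * (x - a))
    (by
      filter_upwards [hw] with x hx
      exact (hx.sub ((((hasDerivAt_id x).sub_const a).fun_pow 2).const_mul (c / 2))).congr_deriv
        (by simp; ring))
    (by simpa using hw0.sub ((hsub.pow 2).const_mul (c / 2))) r2
  norm_num at h1 h2 r2 r3
  -- `w'² - 2cw = (w' - c(x - a)) (w' + c(x - a)) - 2c (w - c(x - a)²/2)`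
  have h := ((r2.mul (h1.add_const c)).sub (r3.const_mul (2 * c))).div h2
    (div_ne_zero hc two_ne_zero)
  rw [show (d / 2 * (c + c) - 2 * c * (d / 2 / 3)) / (c / 2) = 4 * d / 3 by field_simp; ring] at h
  refine h.congr' ?_
  filter_upwards [hne, h2.eventually_ne (div_ne_zero hc two_ne_zero)] with x hx hwx
  have hwx : w x ≠ 0 := (div_ne_zero_iff.1 hwx).1
  simp only [Pi.div_apply]
  field_simp
  ring

theorem hasDerivWithinAt_euler_lagrange_regular_terms {v v1 : ℝ → ℝ} {s : Set ℝ} {p₀ c : ℝ}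
    (hp₀ : p₀ ≠ 0)
    (hv : HasDerivWithinAt v (v1 p₀) s p₀) (hv1 : HasDerivWithinAt v1 c s p₀)
    (hvp₀ : v p₀ = p₀) (hv1p₀ : v1 p₀ = 1) :
    HasDerivWithinAt
      (fun p => -(1 / 4) * (v1 p + 1) ^ 2 / (v p + p) + 2 * v p * v1 p ^ 2 / (1 + v p ^ 2))
      ((1 - c * p₀) / (2 * p₀ ^ 2) +
        2 * (1 - p₀ ^ 2 + 2 * p₀ * c * (1 + p₀ ^ 2)) / (1 + p₀ ^ 2) ^ 2) s p₀ := by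
  have hB := (((hv1.add_const 1).fun_pow 2).const_mul (-(1 / 4))).div
    (hv.add (hasDerivWithinAt_id p₀ s)) (by simpa [hvp₀] using hp₀)
  have hC := ((hv.const_mul 2).mul (hv1.fun_pow 2)).div ((hv.fun_pow 2).const_add 1)
    (by positivity)
  refine (hB.add hC).congr_deriv ?_
  simp only [Pi.add_apply, Pi.mul_apply, id, hvp₀, hv1p₀]
  field_simp
  ring

theorem three_mul_sq_sub_one_div_ne_zero {p : ℝ} (hp : 0 < p) (hp' : p ≠ 1 / Real.sqrt 3) :
    (3 * p ^ 2 - 1) / (3 * p * (1 + p ^ 2)) ≠ 0 := by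
  refine div_ne_zero (fun h => hp' ?_) (by positivity)
  rw [one_div, ← Real.sqrt_inv, show (3 : ℝ)⁻¹ = p ^ 2 by linarith, Real.sqrt_sq hp.le]

theorem singular_extremal_endpoint_derivatives_general
    (p₀ δ : ℝ) (hp₀ : 0 < p₀) (hp₀' : p₀ ≠ 1 / Real.sqrt 3) (hδ : 0 < δ)
    (v v1 v2 v3 : ℝ → ℝ)
    (hd1 : ∀ p ∈ Set.Icc (p₀ - δ) p₀, HasDerivWithinAt v (v1 p) (Set.Icc (p₀ - δ) p₀) p)
    (hd2 : ∀ p ∈ Set.Icc (p₀ - δ) p₀, HasDerivWithinAt v1 (v2 p) (Set.Icc (p₀ - δ) p₀) p)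
    (hd3 : ∀ p ∈ Set.Icc (p₀ - δ) p₀, HasDerivWithinAt v2 (v3 p) (Set.Icc (p₀ - δ) p₀) p)
    (hvp₀ : v p₀ = p₀) (hv1p₀ : v1 p₀ = 1)
    (hgt : ∀ p ∈ Set.Ico (p₀ - δ) p₀, p < v p)
    (heq : ∀ p ∈ Set.Ico (p₀ - δ) p₀,
      v2 p = -(1 / 4) * (v1 p - 1) ^ 2 / (v p - p) - (1 / 4) * (v1 p + 1) ^ 2 / (v p + p) +
        2 * v p * (v1 p) ^ 2 / (1 + (v p) ^ 2)) :
    v2 p₀ = (3 * p₀ ^ 2 - 1) / (3 * p₀ * (1 + p₀ ^ 2)) ∧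
    v3 p₀ = (3 * p₀ ^ 4 + 2 * p₀ ^ 2 + 1) / (2 * p₀ ^ 2 * (1 + p₀ ^ 2) ^ 2) := by
  have hlt : p₀ - δ < p₀ := by linarith
  have hI : Icc (p₀ - δ) p₀ ∈ 𝓝[<] p₀ := Icc_mem_nhdsLT hlt
  have hmem : p₀ ∈ Icc (p₀ - δ) p₀ := right_mem_Icc.2 hlt.le
  have hwI : ∀ p ∈ Icc (p₀ - δ) p₀,
      HasDerivWithinAt (fun p => v p - p) (v1 p - 1) (Icc (p₀ - δ) p₀) p :=
    fun p hp => (hd1 p hp).sub (hasDerivWithinAt_id p _)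
  have hw'I : ∀ p ∈ Icc (p₀ - δ) p₀,
      HasDerivWithinAt (fun p => v1 p - 1) (v2 p) (Icc (p₀ - δ) p₀) p :=
    fun p hp => (hd2 p hp).sub_const 1
  have hw := eventually_hasDerivAt_of_forall_Icc hlt hwI
  have hw' := eventually_hasDerivAt_of_forall_Icc hlt hw'I
  have hw0 := (hwI p₀ hmem).tendsto_nhdsLT hI
  have hw'0 := (hw'I p₀ hmem).tendsto_nhdsLT hI
  simp only [hvp₀, hv1p₀, sub_self] at hw0 hw'0
  have hG := hasDerivWithinAt_euler_lagrange_regular_terms hp₀.ne' (hd1 p₀ hmem) (hd2 p₀ hmem)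
    hvp₀ hv1p₀
  set G := fun p => -(1 / 4) * (v1 p + 1) ^ 2 / (v p + p) + 2 * v p * v1 p ^ 2 / (1 + v p ^ 2)
  have hEL : ∀ᶠ p in 𝓝[<] p₀, -(1 / 4) * ((v1 p - 1) ^ 2 / (v p - p)) + G p = v2 p := by
    filter_upwards [Ico_mem_nhdsLT hlt] with p hp
    rw [heq p hp]
    ring
  have hv2 := (hd3 p₀ hmem).tendsto_nhdsLT hI
  have hA := tendsto_sq_deriv_div_nhdsLT hw hw' hw0 hw'0 hv2 (by
    filter_upwards [Ico_mem_nhdsLT hlt] with p hp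
    linarith [hgt p hp])
  have hcG : -(1 / 4) * (2 * v2 p₀) + G p₀ = v2 p₀ :=
    tendsto_nhds_unique (((hA.const_mul _).add (hG.tendsto_nhdsLT hI)).congr' hEL) hv2
  have hc : v2 p₀ = (3 * p₀ ^ 2 - 1) / (3 * p₀ * (1 + p₀ ^ 2)) := by
    simp only [G, hvp₀, hv1p₀] at hcG
    field_simp at hcG ⊢
    linarith
  refine ⟨hc, ?_⟩
  have hv3 := (hd3 p₀ hmem).tendsto_slope_nhdsLT hI
  have hA' := tendsto_slope_sq_deriv_div_nhdsLT (hc ▸ three_mul_sq_sub_one_div_ne_zero hp₀ hp₀')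
    hw hw' hw0 hw'0 hv3
  have hd := tendsto_nhds_unique
    (((hA'.const_mul (-(1 / 4))).add (hG.tendsto_slope_nhdsLT hI)).congr' ?_) hv3
  · rw [hc] at hd
    field_simp at hd ⊢
    linear_combination -(1 / 4) * hd
  · filter_upwards [hEL] with p hp
    conv_rhs => rw [← hp, ← hcG]
    ring

/-- (Endpoint derivatives of singular extremals.) If `v ∈ C³[p₀ − δ, p₀]`
satisfies `v(p₀) = p₀`, `v'(p₀) = 1`, `v(p) > p` for `p < p₀` and the Euler–Lagrange
equation `v'' = −¼(v'−1)²/(v−p) − ¼(v'+1)²/(v+p) + 2vv'²/(1+v²)` on `[p₀ − δ, p₀)`,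
where `p₀ > 0`, `p₀ ≠ 1/√3`, then `v''(p₀) = (3p₀² − 1)/(3p₀(1 + p₀²))` and
`v'''(p₀) = (3p₀⁴ + 2p₀² + 1)/(2p₀²(1 + p₀²)²)`. -/
theorem singular_extremal_endpoint_derivatives
    (p₀ δ : ℝ) (hp₀ : 0 < p₀) (hp₀' : p₀ ≠ 1 / Real.sqrt 3) (hδ : 0 < δ)
    (v v1 v2 v3 : ℝ → ℝ)
    (hd1 : ∀ p ∈ Set.Icc (p₀ - δ) p₀, HasDerivWithinAt v (v1 p) (Set.Icc (p₀ - δ) p₀) p)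
    (hd2 : ∀ p ∈ Set.Icc (p₀ - δ) p₀, HasDerivWithinAt v1 (v2 p) (Set.Icc (p₀ - δ) p₀) p)
    (hd3 : ∀ p ∈ Set.Icc (p₀ - δ) p₀, HasDerivWithinAt v2 (v3 p) (Set.Icc (p₀ - δ) p₀) p)
    (hc3 : ContinuousOn v3 (Set.Icc (p₀ - δ) p₀))
    (hvp₀ : v p₀ = p₀) (hv1p₀ : v1 p₀ = 1)
    (hgt : ∀ p ∈ Set.Ico (p₀ - δ) p₀, p < v p)
    (heq : ∀ p ∈ Set.Ico (p₀ - δ) p₀,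
      v2 p = -(1 / 4) * (v1 p - 1) ^ 2 / (v p - p) - (1 / 4) * (v1 p + 1) ^ 2 / (v p + p) +
        2 * v p * (v1 p) ^ 2 / (1 + (v p) ^ 2)) :
    v2 p₀ = (3 * p₀ ^ 2 - 1) / (3 * p₀ * (1 + p₀ ^ 2)) ∧
    v3 p₀ = (3 * p₀ ^ 4 + 2 * p₀ ^ 2 + 1) / (2 * p₀ ^ 2 * (1 + p₀ ^ 2) ^ 2) :=
  singular_extremal_endpoint_derivatives_general p₀ δ hp₀ hp₀' hδ v v1 v2 v3 hd1 hd2 hd3 hvp₀ hv1p₀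
    hgt heq
end

section
/- Let ν be a C² function on an interval J ⊂ (0, ∞) satisfying ν(q) > q > 0 and q ν'(q) − ν(q) ≠ 0 for all q ∈ J, and satisfying the equation ν''(q) = −¼(ν'(q) − 1)²/(ν(q) − q) − ¼(ν'(q) + 1)²/(ν(q) + q) + 2ν'(q)²/ν(q) on J (the case α = 0 of the rescaled Euler–Lagrange equation). Define the scaling invariants t(q) = ν(q)/q and x(q) = (q ν'(q) − ν(q))/q. Then for all q ∈ J one has t(q) > 1, x(q) ≠ 0, and ν''(q) · q / x(q) − 1 = 2 + (3/2)( x(q)/t(q) + t(q)/x(q) ) − x(q)/( 2 t(q) (t(q)² − 1) ); equivalently, since dt/dq = x/q, the invariants satisfy the Abel equation dx/dt = 2 + (3/2)(x/t + t/x) − x/(2t(t² − 1)). -/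
/-!
The limit equation is homogeneous of degree `-1` under `(q, ν) ↦ (c q, c ν)` with `ν'` fixed,
so `q ν''` depends only on the invariants `t = ν/q` and `x = ν' - t`. As `dt/dq = x/q` and
`dx/dq = ν'' - x/q`, this makes `dx/dt = q ν''/x - 1` a rational function of `t` and `x`, which a
partial-fraction computation identifies with the right-hand side of the Abel equation.
-/

/-- Right-hand side `ν''` of the limit equation at `q`, with `v = ν(q)` and `w = ν'(q)`. -/
noncomputable def limitEquationRHS (q v w : ℝ) : ℝ :=
  -(1 / 4) * (w - 1) ^ 2 / (v - q) - (1 / 4) * (w + 1) ^ 2 / (v + q) + 2 * w ^ 2 / v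

noncomputable def abelRHS (t x : ℝ) : ℝ :=
  2 + 3 / 2 * (x / t + t / x) - x / (2 * t * (t ^ 2 - 1))

theorem limitEquationRHS_mul (c q v w : ℝ) :
    limitEquationRHS (c * q) (c * v) w = limitEquationRHS q v w / c := by
  rcases eq_or_ne c 0 with rfl | hc
  · simp [limitEquationRHS]
  · simp only [limitEquationRHS, ← mul_sub, ← mul_add]
    field_simp

theorem limitEquationRHS_one_div_sub_one {t x : ℝ} (ht : t ≠ 0) (ht1 : t ^ 2 ≠ 1) (hx : x ≠ 0) :
    limitEquationRHS 1 t (x + t) / x - 1 = abelRHS t x := by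
  have hsub : t - 1 ≠ 0 := fun h => ht1 (by rw [sub_eq_zero.mp h]; norm_num)
  have hadd : t + 1 ≠ 0 := fun h => ht1 (by rw [eq_neg_of_add_eq_zero_left h]; norm_num)
  have hsq : t ^ 2 - 1 ≠ 0 := sub_ne_zero.mpr ht1
  simp only [limitEquationRHS, abelRHS]
  field_simp
  ring

theorem HasDerivWithinAt.div_id {f : ℝ → ℝ} {f' q : ℝ} {s : Set ℝ}
    (hf : HasDerivWithinAt f f' s q) (hq : q ≠ 0) :
    HasDerivWithinAt (fun r => f r / r) ((q * f' - f q) / q / q) s q := by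
  refine (hf.div (hasDerivWithinAt_id q s) hq).congr_deriv ?_
  simp only [id]
  field_simp

theorem abel_reduction_of_limit_equation_general
    (J : Set ℝ) (hJ : J ⊆ Set.Ioi (0 : ℝ))
    (ν ν1 ν2 : ℝ → ℝ)
    (hd1 : ∀ q ∈ J, HasDerivWithinAt ν (ν1 q) J q)
    (hgt : ∀ q ∈ J, q < ν q)
    (hx : ∀ q ∈ J, q * ν1 q - ν q ≠ 0)
    (heq : ∀ q ∈ J,
      ν2 q = -(1 / 4) * (ν1 q - 1) ^ 2 / (ν q - q) - (1 / 4) * (ν1 q + 1) ^ 2 / (ν q + q) +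
        2 * (ν1 q) ^ 2 / ν q) :
    ∀ q ∈ J,
      1 < ν q / q ∧
      (q * ν1 q - ν q) / q ≠ 0 ∧
      (ν2 q * q / ((q * ν1 q - ν q) / q) - 1 =
        2 + 3 / 2 * (((q * ν1 q - ν q) / q) / (ν q / q) + (ν q / q) / ((q * ν1 q - ν q) / q)) -
          ((q * ν1 q - ν q) / q) / (2 * (ν q / q) * ((ν q / q) ^ 2 - 1))) ∧
      HasDerivWithinAt (fun r => ν r / r) (((q * ν1 q - ν q) / q) / q) J q := by
  intro q hq
  have hq0 : 0 < q := hJ hq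
  set t := ν q / q with ht_def
  set x := (q * ν1 q - ν q) / q with hx_def
  have ht : 1 < t := (one_lt_div hq0).mpr (hgt q hq)
  have hx0 : x ≠ 0 := div_ne_zero (hx q hq) hq0.ne'
  have hνq : ν q = q * t := by rw [ht_def]; field_simp
  have hν1q : ν1 q = x + t := by rw [hx_def, ht_def]; field_simp; ring
  have hscaled : ν2 q * q = limitEquationRHS 1 t (x + t) :=
    calc ν2 q * q = limitEquationRHS (q * 1) (q * t) (x + t) * q := by
          rw [heq q hq, mul_one, ← hνq, ← hν1q]; rfl
      _ = limitEquationRHS 1 t (x + t) := by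
          rw [limitEquationRHS_mul]; field_simp
  refine ⟨ht, hx0, ?_, (hd1 q hq).div_id hq0.ne'⟩
  rw [hscaled]
  exact limitEquationRHS_one_div_sub_one (by positivity) (by nlinarith) hx0

/-- (Reduction to an Abel equation via scaling invariants.) If `ν ∈ C²`
on an interval `J ⊂ (0, ∞)` satisfies `ν(q) > q > 0`, `qν'(q) − ν(q) ≠ 0` and the rescaled
Euler–Lagrange equation `ν'' = −¼(ν'−1)²/(ν−q) − ¼(ν'+1)²/(ν+q) + 2ν'²/ν` (case `α = 0`),
then the invariants `t = ν/q`, `x = (qν' − ν)/q` satisfy `t > 1`, `x ≠ 0`,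
`ν''·q/x − 1 = 2 + (3/2)(x/t + t/x) − x/(2t(t² − 1))`, and `dt/dq = x/q`; i.e. they solve
the Abel equation `dx/dt = 2 + (3/2)(x/t + t/x) − x/(2t(t² − 1))`. -/
theorem abel_reduction_of_limit_equation
    (J : Set ℝ) (hJ : J ⊆ Set.Ioi (0 : ℝ)) (hJint : J.OrdConnected)
    (ν ν1 ν2 : ℝ → ℝ)
    (hd1 : ∀ q ∈ J, HasDerivWithinAt ν (ν1 q) J q)
    (hd2 : ∀ q ∈ J, HasDerivWithinAt ν1 (ν2 q) J q)
    (hc2 : ContinuousOn ν2 J)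
    (hgt : ∀ q ∈ J, q < ν q)
    (hx : ∀ q ∈ J, q * ν1 q - ν q ≠ 0)
    (heq : ∀ q ∈ J,
      ν2 q = -(1 / 4) * (ν1 q - 1) ^ 2 / (ν q - q) - (1 / 4) * (ν1 q + 1) ^ 2 / (ν q + q) +
        2 * (ν1 q) ^ 2 / ν q) :
    ∀ q ∈ J,
      1 < ν q / q ∧
      (q * ν1 q - ν q) / q ≠ 0 ∧
      (ν2 q * q / ((q * ν1 q - ν q) / q) - 1 =
        2 + 3 / 2 * (((q * ν1 q - ν q) / q) / (ν q / q) + (ν q / q) / ((q * ν1 q - ν q) / q)) -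
          ((q * ν1 q - ν q) / q) / (2 * (ν q / q) * ((ν q / q) ^ 2 - 1))) ∧
      HasDerivWithinAt (fun r => ν r / r) (((q * ν1 q - ν q) / q) / q) J q :=
  abel_reduction_of_limit_equation_general J hJ ν ν1 ν2 hd1 hgt hx heq
end

section
/- Let f(p, v, w) = 2√(v² − p²) w²/(1 + v²)² − (pw − v)/(v(1 + v²)√(v² − p²)). For every integer k ≥ 0 there exist functions P_k(p, v, w) and Q_k(p, v) such that: P_k is a polynomial of degree at most 2 in w whose coefficients are real-analytic functions of (p, v) on the set {v ≠ 0}; Q_k is real-analytic in (p, v) on {v ≠ 0} and does not depend on w; and for all (p, v, w) with |p| < v one has ∂ᵏf/∂vᵏ(p, v, w) = (v² − p²)^{−(2k−1)/2} P_k(p, v, w) + (pw − v)(v² − p²)^{−(2k+1)/2} Q_k(p, v). -/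
/-!
Write `x = v² - p²`. The function `f` already has the shape
`x^(1/2) P₀ + (pw - v) x^(-1/2) Q₀`, and the shape is stable under `∂/∂v`: differentiating
`x^α P + (pw - v) x^(α-1) Q` with `∂x/∂v = 2v` gives
`x^(α-1) (2αvP + x ∂P/∂v - Q) + (pw - v) x^(α-2) (2(α-1)vQ + x ∂Q/∂v)`,
so both exponents drop by one, `P` stays quadratic in `w`, and the new coefficients are
polynomial expressions in `(p, v)`, the old coefficients and their `v`-derivatives, hence again
analytic. Induction on `k` with `α = -(2k - 1)/2`.
-/

/-- The partial derivative `∂g/∂v` of `g(p, v)`, taken as a Fréchet derivative so that it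
inherits analyticity. -/
noncomputable def sndPartial (g : ℝ → ℝ → ℝ) (p v : ℝ) : ℝ :=
  fderiv ℝ (fun q : ℝ × ℝ => g q.1 q.2) (p, v) (0, 1)

theorem AnalyticOnNhd.sndPartial {g : ℝ → ℝ → ℝ} {s : Set (ℝ × ℝ)}
    (hg : AnalyticOnNhd ℝ (fun q : ℝ × ℝ => g q.1 q.2) s) :
    AnalyticOnNhd ℝ (fun q : ℝ × ℝ => sndPartial g q.1 q.2) s :=
  (ContinuousLinearMap.apply ℝ ℝ ((0 : ℝ), (1 : ℝ))).comp_analyticOnNhd hg.fderiv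

theorem DifferentiableAt.hasDerivAt_sndPartial {g : ℝ → ℝ → ℝ} {p v : ℝ}
    (hg : DifferentiableAt ℝ (fun q : ℝ × ℝ => g q.1 q.2) (p, v)) :
    HasDerivAt (g p) (sndPartial g p v) v :=
  hg.hasFDerivAt.comp_hasDerivAt v ((hasDerivAt_const v p).prodMk (hasDerivAt_id v))

/-- The coefficient of `(v² - p²)^(α - 1)` in `∂/∂v ((v² - p²)^α g)`. -/
noncomputable def rpowDerivCoeff (α : ℝ) (g : ℝ → ℝ → ℝ) (p v : ℝ) : ℝ :=
  2 * α * v * g p v + (v ^ 2 - p ^ 2) * sndPartial g p v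

theorem AnalyticOnNhd.rpowDerivCoeff {g : ℝ → ℝ → ℝ} {s : Set (ℝ × ℝ)}
    (hg : AnalyticOnNhd ℝ (fun q : ℝ × ℝ => g q.1 q.2) s) (α : ℝ) :
    AnalyticOnNhd ℝ (fun q : ℝ × ℝ => rpowDerivCoeff α g q.1 q.2) s := fun q hq =>
  (analyticAt_const.mul analyticAt_snd |>.mul (hg q hq)).add
    (((analyticAt_snd.pow 2).sub (analyticAt_fst.pow 2)).mul (hg.sndPartial q hq))

theorem hasDerivAt_rpow_mul_add_mul_rpow {α p w v P' Q' : ℝ} {P Q : ℝ → ℝ}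
    (hx : 0 < v ^ 2 - p ^ 2) (hP : HasDerivAt P P' v) (hQ : HasDerivAt Q Q' v) :
    HasDerivAt (fun y => (y ^ 2 - p ^ 2) ^ α * P y + (p * w - y) * (y ^ 2 - p ^ 2) ^ (α - 1) * Q y)
      ((v ^ 2 - p ^ 2) ^ (α - 1) * (2 * α * v * P v + (v ^ 2 - p ^ 2) * P' - Q v) +
        (p * w - v) * (v ^ 2 - p ^ 2) ^ (α - 1 - 1) *
          (2 * (α - 1) * v * Q v + (v ^ 2 - p ^ 2) * Q')) v := by
  have hrpow (β : ℝ) : HasDerivAt (fun y : ℝ => (y ^ 2 - p ^ 2) ^ β)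
      (β * (v ^ 2 - p ^ 2) ^ (β - 1) * (2 * v)) v := by
    have hsq : HasDerivAt (fun y : ℝ => y ^ 2 - p ^ 2) (2 * v) v := by
      simpa using (hasDerivAt_pow 2 v).sub_const (p ^ 2)
    exact (Real.hasDerivAt_rpow_const (Or.inl hx.ne')).comp v hsq
  have hlin : HasDerivAt (fun y : ℝ => p * w - y) (-1) v := by
    simpa using (hasDerivAt_id v).const_sub (p * w)
  refine (((hrpow α).mul hP).add ((hlin.mul (hrpow (α - 1))).mul hQ)).congr_deriv ?_
  have hpow (β : ℝ) : (v ^ 2 - p ^ 2) ^ β = (v ^ 2 - p ^ 2) ^ (β - 1) * (v ^ 2 - p ^ 2) := by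
    rw [← Real.rpow_add_one hx.ne', sub_add_cancel]
  simp only [Pi.mul_apply]
  rw [hpow α, hpow (α - 1)]
  ring

theorem newtonF_eq_rpow_mul_add_mul_rpow {p v w : ℝ} (hx : 0 ≤ v ^ 2 - p ^ 2) :
    newtonF p v w = (v ^ 2 - p ^ 2) ^ (1 / 2 : ℝ) * (2 / (1 + v ^ 2) ^ 2 * w ^ 2) +
      (p * w - v) * (v ^ 2 - p ^ 2) ^ (-(1 / 2) : ℝ) * -(1 / (v * (1 + v ^ 2))) := by
  rw [Real.rpow_neg hx, ← Real.sqrt_eq_rpow, newtonF]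
  field_simp
  ring

theorem deriv_eq_of_eq_rpow_mul_add_mul_rpow {g : ℝ → ℝ} {a b c Q : ℝ → ℝ → ℝ}
    (ha : AnalyticOnNhd ℝ (fun q : ℝ × ℝ => a q.1 q.2) {q : ℝ × ℝ | q.2 ≠ 0})
    (hb : AnalyticOnNhd ℝ (fun q : ℝ × ℝ => b q.1 q.2) {q : ℝ × ℝ | q.2 ≠ 0})
    (hc : AnalyticOnNhd ℝ (fun q : ℝ × ℝ => c q.1 q.2) {q : ℝ × ℝ | q.2 ≠ 0})
    (hQ : AnalyticOnNhd ℝ (fun q : ℝ × ℝ => Q q.1 q.2) {q : ℝ × ℝ | q.2 ≠ 0})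
    {α p v w : ℝ} (hpv : |p| < v)
    (hg : ∀ y, |p| < y → g y = (y ^ 2 - p ^ 2) ^ α * (a p y * w ^ 2 + b p y * w + c p y) +
      (p * w - y) * (y ^ 2 - p ^ 2) ^ (α - 1) * Q p y) :
    deriv g v = (v ^ 2 - p ^ 2) ^ (α - 1) * (rpowDerivCoeff α a p v * w ^ 2 +
        rpowDerivCoeff α b p v * w + (rpowDerivCoeff α c p v - Q p v)) +
      (p * w - v) * (v ^ 2 - p ^ 2) ^ (α - 1 - 1) * rpowDerivCoeff (α - 1) Q p v := by
  have hv : v ≠ 0 := ((abs_nonneg p).trans_lt hpv).ne'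
  have hx : 0 < v ^ 2 - p ^ 2 := by nlinarith [abs_nonneg p, sq_abs p]
  have hpartial {f : ℝ → ℝ → ℝ}
      (hf : AnalyticOnNhd ℝ (fun q : ℝ × ℝ => f q.1 q.2) {q : ℝ × ℝ | q.2 ≠ 0}) :
      HasDerivAt (f p) (sndPartial f p v) v :=
    (hf (p, v) hv).differentiableAt.hasDerivAt_sndPartial
  have hP : HasDerivAt (fun y => a p y * w ^ 2 + b p y * w + c p y)
      (sndPartial a p v * w ^ 2 + sndPartial b p v * w + sndPartial c p v) v :=
    (((hpartial ha).mul_const (w ^ 2)).add ((hpartial hb).mul_const w)).add (hpartial hc)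
  have hlocal : g =ᶠ[nhds v] _ := Filter.eventually_of_mem (Ioi_mem_nhds hpv) hg
  rw [hlocal.deriv_eq, (hasDerivAt_rpow_mul_add_mul_rpow hx hP (hpartial hQ)).deriv]
  simp only [rpowDerivCoeff]
  ring

/-- (Structure of the derivatives `∂ᵏf/∂vᵏ`.) For every `k` there are
functions `P_k(p, v, w) = a w² + b w + c` (quadratic in `w`, with coefficients
real-analytic in `(p, v)` on `{v ≠ 0}`) and `Q_k(p, v)` (real-analytic on `{v ≠ 0}`,
independent of `w`) with
`∂ᵏf/∂vᵏ = (v² − p²)^{−(2k−1)/2} P_k + (pw − v)(v² − p²)^{−(2k+1)/2} Q_k` on `|p| < v`. -/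
theorem newtonF_iteratedDeriv_structure :
    ∀ k : ℕ, ∃ a b c Q : ℝ → ℝ → ℝ,
      AnalyticOnNhd ℝ (fun q : ℝ × ℝ => a q.1 q.2) {q : ℝ × ℝ | q.2 ≠ 0} ∧
      AnalyticOnNhd ℝ (fun q : ℝ × ℝ => b q.1 q.2) {q : ℝ × ℝ | q.2 ≠ 0} ∧
      AnalyticOnNhd ℝ (fun q : ℝ × ℝ => c q.1 q.2) {q : ℝ × ℝ | q.2 ≠ 0} ∧
      AnalyticOnNhd ℝ (fun q : ℝ × ℝ => Q q.1 q.2) {q : ℝ × ℝ | q.2 ≠ 0} ∧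
      ∀ p v w : ℝ, |p| < v →
        iteratedDeriv k (fun y => newtonF p y w) v =
          (v ^ 2 - p ^ 2) ^ (-(2 * (k : ℝ) - 1) / 2) *
            (a p v * w ^ 2 + b p v * w + c p v) +
          (p * w - v) * (v ^ 2 - p ^ 2) ^ (-(2 * (k : ℝ) + 1) / 2) * Q p v := by
  have hexp (k : ℕ) : -(2 * (k : ℝ) + 1) / 2 = -(2 * (k : ℝ) - 1) / 2 - 1 := by ring
  intro k
  induction k with
  | zero =>
    refine ⟨fun _ v => 2 / (1 + v ^ 2) ^ 2, 0, 0, fun _ v => -(1 / (v * (1 + v ^ 2))),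
      fun q _ => analyticAt_const.div ((analyticAt_const.add (analyticAt_snd.pow 2)).pow 2)
        (show (1 + q.2 ^ 2) ^ 2 ≠ 0 by positivity),
      fun _ _ => analyticAt_const, fun _ _ => analyticAt_const,
      fun q hq => (analyticAt_const.div (analyticAt_snd.mul (analyticAt_const.add
        (analyticAt_snd.pow 2))) (mul_ne_zero hq (show 1 + q.2 ^ 2 ≠ 0 by positivity))).neg,
      fun p v w hpv => ?_⟩
    rw [iteratedDeriv_zero,
      newtonF_eq_rpow_mul_add_mul_rpow (by nlinarith [abs_nonneg p, sq_abs p])]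
    norm_num
  | succ k ih =>
    obtain ⟨a, b, c, Q, ha, hb, hc, hQ, hderiv⟩ := ih
    set α : ℝ := -(2 * (k : ℝ) - 1) / 2
    have hsucc : -(2 * ((k + 1 : ℕ) : ℝ) - 1) / 2 = α - 1 := by push_cast; ring
    refine ⟨rpowDerivCoeff α a, rpowDerivCoeff α b, fun p v => rpowDerivCoeff α c p v - Q p v,
      rpowDerivCoeff (α - 1) Q, ha.rpowDerivCoeff α, hb.rpowDerivCoeff α,
      (hc.rpowDerivCoeff α).sub hQ, hQ.rpowDerivCoeff (α - 1), fun p v w hpv => ?_⟩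
    rw [iteratedDeriv_succ, hexp, hsucc]
    exact deriv_eq_of_eq_rpow_mul_add_mul_rpow ha hb hc hQ hpv fun y hy => by
      rw [hderiv p y w hy, hexp]
end
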